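/- arXiv:1612.03086 — 6 statements merged into one kernel-verified Lean document; each statement's English description precedes it below -/
import Mathlib

section
/- Let d, s ≥ 0 with d + s ≤ n(q-1), and write d = (q-1)u + v with 0 ≤ v < q-1. Then the monomial m_0 = X_1^{q-1}···X_u^{q-1}·X_{u+1}^v of degree d satisfies |U_s(m_0)| ≤ |U_s(m)| for every monomial m of degree exactly d (with individual degrees at most q-1). -/
/-- Total degree of a monomial (exponent vector). -/
def mdeg {n : ℕ} (m : Fin n →₀ ℕ) : ℕ := ∑ i, m i

/-- `U_s(m)`: monomials of degree `deg m + s` dominating `m` coordinatewise,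
with all exponents at most `q - 1`. -/
def Uset (q : ℕ) {n : ℕ} (m : Fin n →₀ ℕ) (s : ℕ) : Set (Fin n →₀ ℕ) :=
  {m' | mdeg m' = mdeg m + s ∧ ∀ i, m i ≤ m' i ∧ m' i ≤ q - 1}

/-- The "greedy" monomial `m₀ = X_1^{q-1} ⋯ X_u^{q-1} X_{u+1}^v`. -/
noncomputable def m0 (q n u v : ℕ) : Fin n →₀ ℕ :=
  Finsupp.equivFunOnFinite.symm fun i : Fin n =>
    if (i : ℕ) < u then q - 1 else if (i : ℕ) = u then v else 0

/-- number of `f : Fin n → ℕ` with `f i ≤ c i` and `∑ f = s`. -/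
def Nc {n : ℕ} (c : Fin n → ℕ) (s : ℕ) : ℕ :=
  ((Fintype.piFinset fun i => Finset.range (c i + 1)).filter (fun f => ∑ i, f i = s)).card

lemma uset_ncard (q : ℕ) {n : ℕ} (m : Fin n →₀ ℕ) (s : ℕ) (hm : ∀ i, m i ≤ q - 1) :
    (Uset q m s).ncard = Nc (fun i => q - 1 - m i) s := by
  classical
  have hinj : Function.Injective
      (fun f : Fin n → ℕ => m + Finsupp.equivFunOnFinite.symm f) := by
    intro f g hfg
    have := add_left_cancel hfg
    exact Finsupp.equivFunOnFinite.symm.injective this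
  have hset : Uset q m s =
      ↑(((Fintype.piFinset fun i => Finset.range (q - 1 - m i + 1)).filter
          (fun f => ∑ i, f i = s)).image
        (fun f => m + Finsupp.equivFunOnFinite.symm f)) := by
    ext m'
    simp only [Finset.coe_image, Set.mem_image, Finset.mem_coe, Finset.mem_filter,
      Fintype.mem_piFinset, Finset.mem_range, Uset, Set.mem_setOf_eq]
    constructor
    · rintro ⟨hdeg, hb⟩
      refine ⟨fun i => m' i - m i, ⟨fun i => ?_, ?_⟩, ?_⟩
      · show m' i - m i < q - 1 - m i + 1
        have := hb i; omega
      · have h1 : ∀ i ∈ Finset.univ, m i ≤ m' i := fun i _ => (hb i).1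
        rw [Finset.sum_tsub_distrib _ h1]
        have := hdeg
        unfold mdeg at this
        omega
      · ext i
        simp only [Finsupp.add_apply, Finsupp.equivFunOnFinite_symm_apply_apply]
        have := hb i; omega
    · rintro ⟨f, ⟨hb, hsum⟩, rfl⟩
      constructor
      · unfold mdeg
        simp only [Finsupp.add_apply, Finsupp.equivFunOnFinite_symm_apply_apply,
          Finset.sum_add_distrib]
        omega
      · intro i
        simp only [Finsupp.add_apply, Finsupp.equivFunOnFinite_symm_apply_apply]
        have := hb i; have := hm i; omega
  rw [hset, Set.ncard_coe_finset, Finset.card_image_of_injective _ hinj]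
  rfl




lemma Nc_comp_perm {n : ℕ} (c : Fin n → ℕ) (σ : Equiv.Perm (Fin n)) (s : ℕ) :
    Nc (c ∘ σ) s = Nc c s := by
  classical
  unfold Nc
  apply Finset.card_nbij' (fun f => f ∘ σ.symm) (fun f => f ∘ σ)
  · intro f hf
    simp only [Finset.mem_coe, Finset.mem_filter, Fintype.mem_piFinset, Finset.mem_range,
      Function.comp] at hf ⊢
    refine ⟨fun i => ?_, ?_⟩
    · have := hf.1 (σ.symm i); simpa using this
    · rw [Equiv.sum_comp σ.symm f]; exact hf.2
  · intro f hf
    simp only [Finset.mem_coe, Finset.mem_filter, Fintype.mem_piFinset, Finset.mem_range,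
      Function.comp] at hf ⊢
    exact ⟨fun i => hf.1 (σ i), by rw [Equiv.sum_comp σ f]; exact hf.2⟩
  · intro f _; funext k; simp
  · intro f _; funext k; simp

lemma Nc_transfer {n : ℕ} (c : Fin n → ℕ) (s : ℕ) {i j : Fin n} (hij : i ≠ j)
    (hj : 0 < c j) (hle : c j ≤ c i) :
    Nc (Function.update (Function.update c i (c i + 1)) j (c j - 1)) s ≤ Nc c s := by
  classical
  set c' := Function.update (Function.update c i (c i + 1)) j (c j - 1) with hc'
  have hc'i : c' i = c i + 1 := by
    rw [hc', Function.update_of_ne hij, Function.update_self]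
  have hc'j : c' j = c j - 1 := by rw [hc', Function.update_self]
  have hc'k : ∀ k, k ≠ i → k ≠ j → c' k = c k := by
    intro k hki hkj
    rw [hc', Function.update_of_ne hkj, Function.update_of_ne hki]
  unfold Nc
  set φ : (Fin n → ℕ) → (Fin n → ℕ) := fun f =>
    if f i ≤ c i then f
    else Function.update (Function.update f j (c j)) i (c i + 1 + f j - c j) with hφ
  -- evaluation lemmas for case B
  have hBi : ∀ f : Fin n → ℕ,
      (Function.update (Function.update f j (c j)) i (c i + 1 + f j - c j)) i
        = c i + 1 + f j - c j := fun f => Function.update_self _ _ _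
  have hBj : ∀ f : Fin n → ℕ,
      (Function.update (Function.update f j (c j)) i (c i + 1 + f j - c j)) j = c j := by
    intro f
    rw [Function.update_of_ne (Ne.symm hij), Function.update_self]
  have hBk : ∀ (f : Fin n → ℕ) k, k ≠ i → k ≠ j →
      (Function.update (Function.update f j (c j)) i (c i + 1 + f j - c j)) k = f k := by
    intro f k hki hkj
    rw [Function.update_of_ne hki, Function.update_of_ne hkj]
  -- sum of an update at two points
  have hsum2 : ∀ (f : Fin n → ℕ) (a b : ℕ),
      ∑ k, (Function.update (Function.update f j b) i a) k
        = a + b + ∑ k ∈ (Finset.univ.erase j).erase i, f k := by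
    intro f a b
    rw [show ∑ k, (Function.update (Function.update f j b) i a) k
        = ∑ k ∈ Finset.univ, (Function.update (Function.update f j b) i a) k from rfl]
    rw [Finset.sum_update_of_mem (Finset.mem_univ i), Finset.sdiff_singleton_eq_erase,
      Finset.sum_update_of_mem (Finset.mem_erase.2 ⟨Ne.symm hij, Finset.mem_univ j⟩),
      Finset.sdiff_singleton_eq_erase, Finset.erase_right_comm]
    ring
  have hsumf : ∀ f : Fin n → ℕ,
      ∑ k, f k = f i + f j + ∑ k ∈ (Finset.univ.erase j).erase i, f k := by
    intro f
    have h1 : ∑ k ∈ Finset.univ.erase j, f k + f j = ∑ k, f k :=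
      Finset.sum_erase_add _ _ (Finset.mem_univ j)
    have h2 : ∑ k ∈ (Finset.univ.erase j).erase i, f k + f i
        = ∑ k ∈ Finset.univ.erase j, f k :=
      Finset.sum_erase_add _ _ (Finset.mem_erase.2 ⟨hij, Finset.mem_univ i⟩)
    omega
  apply Finset.card_le_card_of_injOn φ
  · intro f hf
    simp only [Finset.mem_coe, Finset.mem_filter, Fintype.mem_piFinset, Finset.mem_range] at hf ⊢
    obtain ⟨hb, hs⟩ := hf
    have hbi := hb i; rw [hc'i] at hbi
    have hbj := hb j; rw [hc'j] at hbj
    by_cases hcase : f i ≤ c i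
    · rw [hφ]; simp only [if_pos hcase]
      refine ⟨fun k => ?_, hs⟩
      by_cases hki : k = i
      · subst hki; omega
      · by_cases hkj : k = j
        · subst hkj; omega
        · have := hb k; rw [hc'k k hki hkj] at this; omega
    · rw [hφ]; simp only [if_neg hcase]
      have hfi : f i = c i + 1 := by omega
      refine ⟨fun k => ?_, ?_⟩
      · by_cases hki : k = i
        · subst hki; rw [hBi]; omega
        · by_cases hkj : k = j
          · subst hkj; rw [hBj]; omega
          · rw [hBk f k hki hkj]
            have := hb k; rw [hc'k k hki hkj] at this; omega
      · rw [hsum2 f _ (c j)]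
        have := hsumf f
        omega
  · intro f1 hf1 f2 hf2 heq
    simp only [Finset.coe_filter, Set.mem_setOf_eq, Fintype.mem_piFinset,
      Finset.mem_range] at hf1 hf2
    obtain ⟨hb1, _⟩ := hf1
    obtain ⟨hb2, _⟩ := hf2
    have hb1j := hb1 j; rw [hc'j] at hb1j
    have hb2j := hb2 j; rw [hc'j] at hb2j
    have hb1i := hb1 i; rw [hc'i] at hb1i
    have hb2i := hb2 i; rw [hc'i] at hb2i
    by_cases h1 : f1 i ≤ c i <;> by_cases h2 : f2 i ≤ c i
    · rw [hφ] at heq; simpa only [if_pos h1, if_pos h2] using heq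
    · rw [hφ] at heq; simp only [if_pos h1, if_neg h2] at heq
      have := congrFun heq j
      rw [hBj] at this
      omega
    · rw [hφ] at heq; simp only [if_neg h1, if_pos h2] at heq
      have := congrFun heq j
      rw [hBj] at this
      omega
    · rw [hφ] at heq; simp only [if_neg h1, if_neg h2] at heq
      funext k
      by_cases hki : k = i
      · subst hki; omega
      · by_cases hkj : k = j
        · subst hkj
          have := congrFun heq i
          rw [hBi, hBi] at this
          omega
        · have := congrFun heq k
          rw [hBk f1 k hki hkj, hBk f2 k hki hkj] at this
          exact this

def Extreme (q : ℕ) {n : ℕ} (c : Fin n → ℕ) : Prop :=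
  ∀ i j : Fin n, i ≠ j → ¬(0 < c j ∧ c j ≤ c i ∧ c i < q - 1)

lemma last_eq {q n : ℕ} (g : Fin (n + 1) → ℕ) (hm : Monotone g)
    (hb : ∀ i, g i ≤ q - 1) (he : Extreme q g) :
    g (Fin.last n) = min (∑ i, g i) (q - 1) := by
  rcases lt_or_eq_of_le (hb (Fin.last n)) with hlt | heq
  · have hz : ∀ k, k ≠ Fin.last n → g k = 0 := by
      intro k hk
      by_contra hk0
      exact he (Fin.last n) k (Ne.symm hk)
        ⟨Nat.pos_of_ne_zero hk0, hm (Fin.le_last k), hlt⟩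
    have hsum : ∑ i, g i = g (Fin.last n) :=
      Finset.sum_eq_single _ (fun k _ hk => hz k hk) (fun h => absurd (Finset.mem_univ _) h)
    omega
  · have : g (Fin.last n) ≤ ∑ i, g i :=
      Finset.single_le_sum (fun k _ => Nat.zero_le _) (Finset.mem_univ _)
    omega

lemma unique_extreme (q : ℕ) : ∀ n (g h : Fin n → ℕ), Monotone g → Monotone h →
    (∀ i, g i ≤ q - 1) → (∀ i, h i ≤ q - 1) → Extreme q g → Extreme q h →
    ∑ i, g i = ∑ i, h i → g = h := by
  intro n
  induction n with
  | zero => intro g h _ _ _ _ _ _ _; funext i; exact i.elim0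
  | succ n ih =>
    intro g h hgm hhm hgb hhb hge hhe hsum
    have hlast : g (Fin.last n) = h (Fin.last n) := by
      rw [last_eq g hgm hgb hge, last_eq h hhm hhb hhe, hsum]
    have hcast : (g ∘ Fin.castSucc) = (h ∘ Fin.castSucc) := by
      apply ih
      · exact hgm.comp (fun a b hab => Fin.castSucc_le_castSucc_iff.2 hab)
      · exact hhm.comp (fun a b hab => Fin.castSucc_le_castSucc_iff.2 hab)
      · intro i; exact hgb _
      · intro i; exact hhb _
      · intro i j hij hc
        exact hge _ _ (fun e => hij (Fin.castSucc_injective _ e)) hc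
      · intro i j hij hc
        exact hhe _ _ (fun e => hij (Fin.castSucc_injective _ e)) hc
      · have h1 := Fin.sum_univ_castSucc g
        have h2 := Fin.sum_univ_castSucc h
        simp only [Function.comp]
        omega
    funext k
    rcases Fin.eq_castSucc_or_eq_last k with ⟨k', rfl⟩ | rfl
    · exact congrFun hcast k'
    · exact hlast

lemma main_aux (q : ℕ) {n : ℕ} (s : ℕ) (cstar : Fin n → ℕ) (hms : Monotone cstar)
    (hbs : ∀ i, cstar i ≤ q - 1) (hes : Extreme q cstar) :
    ∀ (k : ℕ) (c : Fin n → ℕ), (∀ i, c i ≤ q - 1) → (∑ i, c i = ∑ i, cstar i) →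
      n * ((q - 1) * (q - 1)) ≤ k + ∑ i, c i * c i → Nc cstar s ≤ Nc c s := by
  intro k
  induction k with
  | zero =>
    intro c hcb hcs hmeas
    -- show c is extreme, else contradiction
    have hext : Extreme q c := by
      intro i j hij ⟨h1, h2, h3⟩
      have hstrict : ∑ l, c l * c l < n * ((q - 1) * (q - 1)) := by
        have := Finset.sum_lt_sum (s := Finset.univ)
          (f := fun l => c l * c l) (g := fun _ => (q - 1) * (q - 1))
          (fun l _ => Nat.mul_le_mul (hcb l) (hcb l))
          ⟨i, Finset.mem_univ i, Nat.mul_self_lt_mul_self h3⟩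
        simpa [Finset.sum_const, Finset.card_univ, mul_comm] using this
      omega
    -- sort c and identify with cstar
    have hsort : c ∘ (Tuple.sort c) = cstar := by
      apply unique_extreme q n _ _ (Tuple.monotone_sort c) hms
        (fun i => hcb _) hbs
        (fun i j hij hc => hext _ _ (fun e => hij ((Tuple.sort c).injective e)) hc)
        hes
      exact (Equiv.sum_comp (Tuple.sort c) c).trans hcs
    exact le_of_eq (by rw [← hsort]; exact Nc_comp_perm c (Tuple.sort c) s)
  | succ k ih =>
    intro c hcb hcs hmeas
    by_cases hext : Extreme q c
    · -- same terminal argument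
      have hsort : c ∘ (Tuple.sort c) = cstar := by
        apply unique_extreme q n _ _ (Tuple.monotone_sort c) hms
          (fun i => hcb _) hbs
          (fun i j hij hc => hext _ _ (fun e => hij ((Tuple.sort c).injective e)) hc)
          hes
        exact (Equiv.sum_comp (Tuple.sort c) c).trans hcs
      exact le_of_eq (by rw [← hsort]; exact Nc_comp_perm c (Tuple.sort c) s)
    · -- transfer step
      unfold Extreme at hext
      push_neg at hext
      obtain ⟨i, j, hij, h1, h2, h3⟩ := hext
      set c' := Function.update (Function.update c i (c i + 1)) j (c j - 1) with hc'
      have hc'i : c' i = c i + 1 := by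
        rw [hc', Function.update_of_ne hij, Function.update_self]
      have hc'j : c' j = c j - 1 := by rw [hc', Function.update_self]
      have hc'k : ∀ l, l ≠ i → l ≠ j → c' l = c l := by
        intro l hli hlj
        rw [hc', Function.update_of_ne hlj, Function.update_of_ne hli]
      have hsum' : ∀ f : Fin n → ℕ,
          ∑ l, f l = f i + f j + ∑ l ∈ (Finset.univ.erase j).erase i, f l := by
        intro f
        have ha : ∑ l ∈ Finset.univ.erase j, f l + f j = ∑ l, f l :=
          Finset.sum_erase_add _ _ (Finset.mem_univ j)
        have hb : ∑ l ∈ (Finset.univ.erase j).erase i, f l + f i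
            = ∑ l ∈ Finset.univ.erase j, f l :=
          Finset.sum_erase_add _ _ (Finset.mem_erase.2 ⟨hij, Finset.mem_univ i⟩)
        omega
      have hrest : ∑ l ∈ (Finset.univ.erase j).erase i, c' l
          = ∑ l ∈ (Finset.univ.erase j).erase i, c l := by
        apply Finset.sum_congr rfl
        intro l hl
        simp only [Finset.mem_erase] at hl
        exact hc'k l hl.1 hl.2.1
      have hrestsq : ∑ l ∈ (Finset.univ.erase j).erase i, c' l * c' l
          = ∑ l ∈ (Finset.univ.erase j).erase i, c l * c l := by
        apply Finset.sum_congr rfl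
        intro l hl
        simp only [Finset.mem_erase] at hl
        rw [hc'k l hl.1 hl.2.1]
      have hcb' : ∀ l, c' l ≤ q - 1 := by
        intro l
        by_cases hli : l = i
        · subst hli; omega
        · by_cases hlj : l = j
          · rw [hlj, hc'j]; have := hcb j; omega
          · rw [hc'k l hli hlj]; exact hcb l
      have hcs' : ∑ l, c' l = ∑ l, cstar l := by
        have e1 := hsum' c'
        have e2 := hsum' c
        rw [hc'i, hc'j, hrest] at e1
        omega
      have hmeas' : n * ((q - 1) * (q - 1)) ≤ k + ∑ l, c' l * c' l := by
        have e1 := hsum' (fun l => c' l * c' l)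
        have e2 := hsum' (fun l => c l * c l)
        rw [hc'i, hc'j, hrestsq] at e1
        have key : ∀ a b : ℕ, 0 < b → b ≤ a →
            a * a + b * b + 1 ≤ (a + 1) * (a + 1) + (b - 1) * (b - 1) := by
          intro a b hb0 hba
          obtain ⟨b', rfl⟩ : ∃ b', b = b' + 1 := ⟨b - 1, by omega⟩
          simp only [Nat.add_sub_cancel]
          nlinarith
        have key' := key (c i) (c j) h1 h2
        omega
      exact le_trans (ih c' hcb' hcs' hmeas') (Nc_transfer c s hij h1 h2)



theorem stmt1 (q n d s u v : ℕ) (hq : IsPrimePow q)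
    (hv : v < q - 1) (hd : d = (q - 1) * u + v) (hds : d + s ≤ n * (q - 1)) :
    ∀ m : Fin n →₀ ℕ, mdeg m = d → (∀ i, m i ≤ q - 1) →
      (Uset q (m0 q n u v) s).ncard ≤ (Uset q m s).ncard := by
  have hq1 : 1 ≤ q - 1 := by omega
  have hdn : d ≤ n * (q - 1) := le_trans (Nat.le_add_right d s) hds
  have hun : u ≤ n := by
    have h1 : (q - 1) * u ≤ (q - 1) * n := by
      calc (q - 1) * u ≤ d := by rw [hd]; exact Nat.le_add_right _ _
        _ ≤ n * (q - 1) := hdn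
        _ = (q - 1) * n := Nat.mul_comm n (q - 1)
    exact Nat.le_of_mul_le_mul_left h1 (by omega)
  have hm0 : ∀ i : Fin n, m0 q n u v i
      = if (i : ℕ) < u then q - 1 else if (i : ℕ) = u then v else 0 := fun i => rfl
  have hm0b : ∀ i, m0 q n u v i ≤ q - 1 := by
    intro i; rw [hm0]; split_ifs <;> omega
  have hvn : u = n → v = 0 := by
    intro hue
    have h1 := hds
    rw [hd, hue, Nat.mul_comm n (q - 1)] at h1
    omega
  have hdeg0 : mdeg (m0 q n u v) = d := by
    unfold mdeg
    have h1 : ∑ i : Fin n, m0 q n u v i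
        = ∑ t ∈ Finset.range n,
            (if t < u then q - 1 else if t = u then v else 0) :=
      Fin.sum_univ_eq_sum_range (fun t => if t < u then q - 1 else if t = u then v else 0) n
    rw [h1, Finset.range_eq_Ico,
      ← Finset.sum_Ico_consecutive _ (Nat.zero_le u) hun, ← Finset.range_eq_Ico]
    have h2 : ∑ t ∈ Finset.range u,
        (if t < u then q - 1 else if t = u then v else 0) = u * (q - 1) := by
      rw [Finset.sum_congr rfl (fun t ht => if_pos (Finset.mem_range.1 ht))]
      simp [Finset.sum_const, Finset.card_range, Nat.mul_comm]
    rcases Nat.lt_or_ge u n with hlt | hge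
    · have h3 : ∑ t ∈ Finset.Ico u n,
          (if t < u then q - 1 else if t = u then v else 0) = v := by
        rw [Finset.sum_eq_single_of_mem u (Finset.mem_Ico.2 ⟨le_refl u, hlt⟩)]
        · simp
        · intro t ht htu
          have := Finset.mem_Ico.1 ht
          rw [if_neg (by omega), if_neg htu]
      rw [h2, h3, hd]; ring
    · have hue : u = n := le_antisymm hun hge
      have hv0 : v = 0 := hvn hue
      have h3 : Finset.Ico u n = ∅ := by rw [hue]; simp
      rw [h2, h3, Finset.sum_empty, hd, hue, hv0]; ring
  -- the extreme capacity vector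
  set cstar : Fin n → ℕ := fun i => q - 1 - m0 q n u v i with hcstar
  have hms : Monotone cstar := by
    intro a b hab
    have hab' : (a : ℕ) ≤ b := hab
    simp only [hcstar, hm0]
    split_ifs <;> omega
  have hbs : ∀ i, cstar i ≤ q - 1 := fun i => Nat.sub_le _ _
  have hes : Extreme q cstar := by
    rintro i j hij ⟨h1, h2, h3⟩
    have hij' : (i : ℕ) ≠ j := fun e => hij (Fin.ext e)
    simp only [hcstar, hm0] at h1 h2 h3
    split_ifs at h1 h2 h3 <;> omega
  intro m hmdeg hmb
  rw [uset_ncard q (m0 q n u v) s hm0b, uset_ncard q m s hmb]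
  have hsumeq : ∑ i, (q - 1 - m i) = ∑ i, cstar i := by
    rw [Finset.sum_tsub_distrib _ (fun i _ => hmb i),
      hcstar]
    rw [Finset.sum_tsub_distrib (f := fun _ => q - 1) Finset.univ (fun i _ => hm0b i)]
    have e0 : ∑ i : Fin n, m0 q n u v i = d := hdeg0
    have e1 : ∑ i : Fin n, m i = d := hmdeg
    rw [e0, e1]
  exact main_aux q s cstar hms hbs hes (n * ((q - 1) * (q - 1)))
    (fun i => q - 1 - m i) (fun i => Nat.sub_le _ _) hsumeq (Nat.le_add_right _ _)
end

section
/- Let q be a prime power, f a nonzero polynomial in P_q(n) of degree exactly d with r := (q-1)n − d ≥ 3e, and let L = ⌊r/(q-1)⌋. Then for P chosen uniformly at random from P_q(n,e), the probability that deg(f·P) < d + e is at most q^{−N_q(⌊L/3⌋, e)}, where N_q(m,e) is the number of monomials in m variables of individual degree ≤ q−1 and total degree ≤ e (and N_q(m,e)=1 when m < 0). -/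
open MvPolynomial

/-- A polynomial is reduced if all individual degrees are at most `q - 1`
(the canonical representative in `P_q(n) = F_q[X]/(X_i^q - X_i)`). -/
def RMReduced {n q : ℕ} (p : MvPolynomial (Fin n) (ZMod q)) : Prop :=
  ∀ m ∈ p.support, ∀ i, m i ≤ q - 1

/-- Membership in `P_q(n,e)`: reduced and total degree at most `e`. -/
def InP (q n e : ℕ) (p : MvPolynomial (Fin n) (ZMod q)) : Prop :=
  RMReduced p ∧ p.totalDegree ≤ e

/-- `h` is the product of `f` and `g` in `P_q(n)`: it is the reduced polynomial
representing the pointwise product of the functions represented by `f` and `g`. -/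
def RedProd {n q : ℕ} (f g h : MvPolynomial (Fin n) (ZMod q)) : Prop :=
  RMReduced h ∧ ∀ x : Fin n → ZMod q, eval x h = eval x f * eval x g

/-- `N_q(L, e)`: number of monomials in `L` variables with individual degrees at
most `q - 1` and total degree at most `e`; by convention `1` for `L < 0`. -/
noncomputable def Nq (q : ℕ) (L : ℤ) (e : ℕ) : ℕ :=
  if 0 ≤ L then Nat.card {m : Fin L.toNat →₀ ℕ // mdeg m ≤ e ∧ ∀ i, m i ≤ q - 1} else 1

section MdegLemmas
variable {n q : ℕ}

lemma mdeg_eq_sum (m : Fin n →₀ ℕ) : (m.sum fun _ e => e) = mdeg m := by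
  rw [Finsupp.sum_fintype]; · rfl
  · intro; rfl

lemma mdeg_add (u v : Fin n →₀ ℕ) : mdeg (u + v) = mdeg u + mdeg v := by
  simp [mdeg, Finsupp.add_apply, Finset.sum_add_distrib]

lemma mdeg_single (i : Fin n) (s : ℕ) : mdeg (Finsupp.single i s) = s := by
  simp [mdeg, Finsupp.single_apply]

lemma mdeg_le_totalDegree {p : MvPolynomial (Fin n) (ZMod q)} {m : Fin n →₀ ℕ}
    (h : m ∈ p.support) : mdeg m ≤ p.totalDegree := by
  rw [← mdeg_eq_sum]; exact le_totalDegree h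

lemma totalDegree_le_of_mdeg {p : MvPolynomial (Fin n) (ZMod q)} {D : ℕ}
    (h : ∀ m ∈ p.support, mdeg m ≤ D) : p.totalDegree ≤ D := by
  apply Finset.sup_le
  intro m hm
  rw [mdeg_eq_sum]; exact h m hm

lemma coeff_eq_zero_of_lt {p : MvPolynomial (Fin n) (ZMod q)} {m : Fin n →₀ ℕ}
    (h : p.totalDegree < mdeg m) : coeff m p = 0 := by
  by_contra hc
  exact absurd (mdeg_le_totalDegree (by rwa [mem_support_iff])) (not_le.2 h)

end MdegLemmas

section Wt
variable {n q : ℕ}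

def wt (q : ℕ) {n : ℕ} (m : Fin n →₀ ℕ) : ℕ := ∑ i : Fin n, m i * q ^ (i : ℕ)

lemma wt_add (u v : Fin n →₀ ℕ) : wt q (u + v) = wt q u + wt q v := by
  simp [wt, Finsupp.add_apply, add_mul, Finset.sum_add_distrib]

lemma wt_fun_inj (hq2 : 2 ≤ q) : ∀ (n : ℕ) (u v : Fin n → ℕ), (∀ i, u i < q) → (∀ i, v i < q) →
    (∑ i : Fin n, u i * q ^ (i : ℕ)) = (∑ i : Fin n, v i * q ^ (i : ℕ)) → ∀ i, u i = v i := by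
  intro n
  induction n with
  | zero => intro u v _ _ _ i; exact absurd i.2 (by omega)
  | succ n ih =>
    intro u v hu hv h i
    rw [Fin.sum_univ_succ, Fin.sum_univ_succ] at h
    have key : ∀ w : Fin (n+1) → ℕ, (∑ i : Fin n, w i.succ * q ^ (i.succ : ℕ))
        = q * ∑ i : Fin n, w i.succ * q ^ (i : ℕ) := by
      intro w
      rw [Finset.mul_sum]
      apply Finset.sum_congr rfl
      intro j _
      rw [Fin.val_succ, pow_succ]
      ring
    rw [key u, key v] at h
    simp only [Fin.val_zero, pow_zero, mul_one] at h
    have h0 : u 0 = v 0 := by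
      have := congrArg (· % q) h
      simpa [Nat.add_mul_mod_self_left, Nat.mod_eq_of_lt (hu 0), Nat.mod_eq_of_lt (hv 0)] using this
    have h1 : (∑ i : Fin n, u i.succ * q ^ (i : ℕ)) = ∑ i : Fin n, v i.succ * q ^ (i : ℕ) := by
      rw [h0] at h
      have hq0 : 0 < q := by omega
      exact Nat.eq_of_mul_eq_mul_left hq0 (by omega)
    rcases Fin.eq_zero_or_eq_succ i with rfl | ⟨j, rfl⟩
    · exact h0
    · exact ih (fun i => u i.succ) (fun i => v i.succ) (fun i => hu i.succ) (fun i => hv i.succ) h1 j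

lemma wt_inj (hq2 : 2 ≤ q) {u v : Fin n →₀ ℕ}
    (hu : ∀ i, u i ≤ q - 1) (hv : ∀ i, v i ≤ q - 1) (h : wt q u = wt q v) : u = v := by
  ext i
  exact wt_fun_inj hq2 n u v (fun i => by have := hu i; omega) (fun i => by have := hv i; omega) h i

end Wt

section NullPoly

lemma prod_range_eq_zero {q : ℕ} (hq : 0 < q) (y : ZMod q) :
    ∏ j ∈ Finset.range q, (y - (j : ZMod q)) = 0 := by
  haveI : NeZero q := ⟨hq.ne'⟩
  apply Finset.prod_eq_zero (Finset.mem_range.2 (ZMod.val_lt y))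
  rw [ZMod.natCast_val, ZMod.cast_id, sub_self]

lemma pow_sub_self_null {p k : ℕ} (hp : p.Prime) (hk : 2 ≤ k) (y : ZMod (p ^ k)) :
    (p : ZMod (p ^ k)) ^ (k - 1) * (y ^ p - y) = 0 := by
  haveI : Fact p.Prime := ⟨hp⟩
  haveI : NeZero (p ^ k) := ⟨pow_ne_zero _ hp.pos.ne'⟩
  set m := y.val with hm
  have hy : ((m : ℕ) : ZMod (p ^ k)) = y := by rw [hm, ZMod.natCast_val, ZMod.cast_id]
  have hle : m ≤ m ^ p := Nat.le_self_pow hp.pos.ne' m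
  have hdvd : p ∣ m ^ p - m := by
    have : ((m ^ p - m : ℕ) : ZMod p) = 0 := by
      rw [Nat.cast_sub hle]
      push_cast
      rw [ZMod.pow_card]
      ring
    exact (ZMod.natCast_eq_zero_iff _ _).1 this
  obtain ⟨u, hu⟩ := hdvd
  have hyy : y ^ p - y = ((p * u : ℕ) : ZMod (p ^ k)) := by
    rw [← hu, Nat.cast_sub hle, ← hy]
    push_cast
    ring
  rw [hyy]
  push_cast
  have : (p : ZMod (p ^ k)) ^ (k - 1) * ((p : ZMod (p^k)) * (u : ZMod (p^k)))
      = ((p : ZMod (p^k)) ^ k) * u := by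
    rw [← mul_assoc, ← pow_succ]
    congr 2
    omega
  rw [this]
  have : ((p : ZMod (p ^ k)) ^ k) = ((p ^ k : ℕ) : ZMod (p ^ k)) := by push_cast; ring
  rw [this, ZMod.natCast_self, zero_mul]

end NullPoly

section Fill

def fillv (cc : ℕ → ℕ) (lo w i : ℕ) : ℕ := min (cc i) (w - ∑ j ∈ Finset.Ico lo i, cc j)

def fill (cc : ℕ → ℕ) (lo hi w i : ℕ) : ℕ :=
  if i ∈ Finset.Ico lo hi then fillv cc lo w i else 0

lemma fill_le (cc : ℕ → ℕ) (lo hi w i : ℕ) : fill cc lo hi w i ≤ cc i := by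
  unfold fill fillv
  split
  · exact min_le_left _ _
  · exact Nat.zero_le _

lemma fill_eq_zero (cc : ℕ → ℕ) (lo hi w i : ℕ) (h : i ∉ Finset.Ico lo hi) :
    fill cc lo hi w i = 0 := by
  unfold fill
  rw [if_neg h]

lemma sum_fillv (cc : ℕ → ℕ) (lo w : ℕ) :
    ∀ x, lo ≤ x → ∑ i ∈ Finset.Ico lo x, fillv cc lo w i
      = min w (∑ i ∈ Finset.Ico lo x, cc i) := by
  refine Nat.le_induction ?_ ?_
  · simp
  · intro x hx ih
    rw [Finset.sum_Ico_succ_top hx, Finset.sum_Ico_succ_top hx, ih]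
    set S := ∑ j ∈ Finset.Ico lo x, cc j with hS
    unfold fillv
    rw [← hS]
    rcases le_total w S with hws | hws
    · rw [min_eq_left hws, Nat.sub_eq_zero_of_le hws]
      simp [min_eq_left (le_trans hws (Nat.le_add_right _ _))]
    · rw [min_eq_right hws]
      have : S + min (cc x) (w - S) = min (S + cc x) w := by
        rw [← min_add_add_left]
        congr 1
        omega
      rw [this, min_comm]

lemma sum_fill_range (cc : ℕ → ℕ) (lo hi w N : ℕ) (hlo : lo ≤ hi) (hhi : hi ≤ N)
    (hcap : w ≤ ∑ i ∈ Finset.Ico lo hi, cc i) :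
    ∑ i ∈ Finset.range N, fill cc lo hi w i = w := by
  have h1 : ∑ i ∈ Finset.range N, fill cc lo hi w i = ∑ i ∈ Finset.Ico lo hi, fill cc lo hi w i := by
    symm
    apply Finset.sum_subset
    · intro i hi
      simp only [Finset.mem_Ico, Finset.mem_range] at *
      omega
    · intro i _ hi
      exact fill_eq_zero _ _ _ _ _ hi
  rw [h1]
  have h2 : ∑ i ∈ Finset.Ico lo hi, fill cc lo hi w i = ∑ i ∈ Finset.Ico lo hi, fillv cc lo w i := by
    apply Finset.sum_congr rfl
    intro i hi
    unfold fill
    rw [if_pos hi]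
  rw [h2, sum_fillv cc lo w hi hlo, min_eq_left hcap]

end Fill

section Blocks

noncomputable def kap (cc : ℕ → ℕ) (Q1 n : ℕ) : ℕ → ℕ
  | 0 => 0
  | b + 1 =>
    if h : ∃ i, i ≤ n ∧ Q1 ≤ ∑ j ∈ Finset.Ico (kap cc Q1 n b) i, cc j then Nat.find h else n

lemma kap_main {Q1 n r t : ℕ} (cc : ℕ → ℕ) (hQ1 : 1 ≤ Q1) (hc : ∀ i, cc i ≤ Q1)
    (hsum : ∑ i ∈ Finset.range n, cc i = r) (hbound : t * (2 * Q1 - 1) ≤ r) :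
    ∀ b ≤ t, kap cc Q1 n b ≤ n ∧
      (∑ j ∈ Finset.range (kap cc Q1 n b), cc j) ≤ b * (2 * Q1 - 1) ∧
      (∀ b' < b, kap cc Q1 n b' < kap cc Q1 n (b' + 1) ∧
        Q1 ≤ ∑ j ∈ Finset.Ico (kap cc Q1 n b') (kap cc Q1 n (b' + 1)), cc j) := by
  intro b
  induction b with
  | zero => intro _; refine ⟨Nat.zero_le _, by simp [kap], by omega⟩
  | succ b ih =>
    intro hbt
    obtain ⟨hkn, hks, hprev⟩ := ih (by omega)
    set κb := kap cc Q1 n b with hκb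
    -- split the total sum
    have hsplit : ∑ j ∈ Finset.range κb, cc j + ∑ j ∈ Finset.Ico κb n, cc j = r := by
      rw [← hsum, Finset.range_eq_Ico, Finset.range_eq_Ico]
      exact Finset.sum_Ico_consecutive _ (Nat.zero_le _) hkn
    have hex : ∃ i, i ≤ n ∧ Q1 ≤ ∑ j ∈ Finset.Ico κb i, cc j := by
      refine ⟨n, le_rfl, ?_⟩
      have h1 : (b + 1) * (2 * Q1 - 1) ≤ r := le_trans (Nat.mul_le_mul_right _ hbt) hbound
      have h2 : ∑ j ∈ Finset.range κb, cc j + Q1 ≤ r := by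
        have : (b + 1) * (2 * Q1 - 1) = b * (2 * Q1 - 1) + (2 * Q1 - 1) := by
          rw [Nat.succ_mul]
        omega
      omega
    have hkap : kap cc Q1 n (b + 1) = Nat.find hex := by
      rw [kap, dif_pos hex]
    set K := kap cc Q1 n (b + 1) with hK
    have hspec := Nat.find_spec hex
    rw [← hkap] at hspec
    obtain ⟨hKn, hKcap⟩ := hspec
    have hKgt : κb < K := by
      by_contra hcon
      push_neg at hcon
      rw [Finset.Ico_eq_empty (by omega)] at hKcap
      simp at hKcap
      omega
    have hKub : ∑ j ∈ Finset.Ico κb K, cc j ≤ 2 * Q1 - 1 := by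
      have hK1 : K - 1 < K := by omega
      have hmin := Nat.find_min hex (by rw [← hkap]; exact hK1)
      push_neg at hmin
      have hK1n : K - 1 ≤ n := by omega
      have hlt : ∑ j ∈ Finset.Ico κb (K - 1), cc j < Q1 := by
        have := hmin hK1n
        omega
      have hsplit2 : ∑ j ∈ Finset.Ico κb (K - 1), cc j + cc (K - 1) = ∑ j ∈ Finset.Ico κb K, cc j := by
        have : K = (K - 1) + 1 := by omega
        rw [this, Finset.sum_Ico_succ_top (by omega)]
        simp
      have := hc (K - 1)
      omega
    refine ⟨hKn, ?_, ?_⟩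
    · have hsplit3 : ∑ j ∈ Finset.range K, cc j
          = ∑ j ∈ Finset.range κb, cc j + ∑ j ∈ Finset.Ico κb K, cc j := by
        rw [Finset.range_eq_Ico, Finset.range_eq_Ico]
        exact (Finset.sum_Ico_consecutive _ (Nat.zero_le _) (le_of_lt hKgt)).symm
      have : (b + 1) * (2 * Q1 - 1) = b * (2 * Q1 - 1) + (2 * Q1 - 1) := by
        rw [Nat.succ_mul]
      omega
    · intro b' hb'
      rcases Nat.lt_succ_iff_lt_or_eq.1 hb' with h | h
      · exact hprev b' h
      · subst h
        exact ⟨hKgt, hKcap⟩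

lemma kap_mono {Q1 n r t : ℕ} (cc : ℕ → ℕ) (hQ1 : 1 ≤ Q1) (hc : ∀ i, cc i ≤ Q1)
    (hsum : ∑ i ∈ Finset.range n, cc i = r) (hbound : t * (2 * Q1 - 1) ≤ r) :
    ∀ b' ≤ t, ∀ b ≤ b', kap cc Q1 n b ≤ kap cc Q1 n b' := by
  intro b'
  induction b' with
  | zero => intro _ b hb
            have : b = 0 := by omega
            subst this; exact le_rfl
  | succ b' ih =>
    intro ht b hb
    rcases Nat.lt_succ_iff_lt_or_eq.1 (Nat.lt_succ_of_le hb) with h | h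
    · calc kap cc Q1 n b ≤ kap cc Q1 n b' := ih (by omega) b (by omega)
        _ ≤ kap cc Q1 n (b' + 1) :=
          le_of_lt ((kap_main cc hQ1 hc hsum hbound (b'+1) ht).2.2 b' (Nat.lt_succ_self _)).1
    · subst h; exact le_rfl

end Blocks

section QmapSec

variable {Q1 n r t e : ℕ} (cc : ℕ → ℕ)

def mfn (t : ℕ) (m : Fin t →₀ ℕ) (b : ℕ) : ℕ := if h : b < t then m ⟨b, h⟩ else 0

noncomputable def Qfun (cc : ℕ → ℕ) (Q1 n t e : ℕ) (m : Fin t →₀ ℕ) (i : ℕ) : ℕ :=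
  (∑ b ∈ Finset.range t, fill cc (kap cc Q1 n b) (kap cc Q1 n (b + 1)) (mfn t m b) i)
    + fill cc (kap cc Q1 n t) n (e - mdeg m) i

noncomputable def Qmap (cc : ℕ → ℕ) (Q1 n t e : ℕ) (m : Fin t →₀ ℕ) : Fin n →₀ ℕ :=
  Finsupp.equivFunOnFinite.symm (fun i => Qfun cc Q1 n t e m i.val)

lemma Qmap_apply (m : Fin t →₀ ℕ) (i : Fin n) :
    Qmap cc Q1 n t e m i = Qfun cc Q1 n t e m i.val := rfl

variable (hQ1 : 1 ≤ Q1) (hc : ∀ i, cc i ≤ Q1)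
  (hsum : ∑ i ∈ Finset.range n, cc i = r) (hA : t * (2 * Q1 - 1) + e ≤ r)

section
include hQ1 hc hsum hA

omit hQ1 hc hsum hA in
lemma mfn_sum (m : Fin t →₀ ℕ) : ∑ b ∈ Finset.range t, mfn t m b = mdeg m := by
  rw [← Fin.sum_univ_eq_sum_range]
  apply Finset.sum_congr rfl
  intro b _
  simp [mfn, b.2]

lemma kap_le_n : ∀ b ≤ t, kap cc Q1 n b ≤ n := by
  intro b hb
  exact (kap_main cc hQ1 hc hsum (by omega) b hb).1

lemma kap_mono' : ∀ b b', b ≤ b' → b' ≤ t → kap cc Q1 n b ≤ kap cc Q1 n b' := by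
  intro b b' h1 h2
  exact kap_mono cc hQ1 hc hsum (by omega) b' h2 b h1

lemma kap_cap : ∀ b < t, Q1 ≤ ∑ j ∈ Finset.Ico (kap cc Q1 n b) (kap cc Q1 n (b + 1)), cc j := by
  intro b hb
  exact ((kap_main cc hQ1 hc hsum (by omega) t le_rfl).2.2 b hb).2

lemma kap_pad : e ≤ ∑ j ∈ Finset.Ico (kap cc Q1 n t) n, cc j := by
  have h1 := (kap_main cc hQ1 hc hsum (by omega) t le_rfl).2.1
  have h2 : ∑ j ∈ Finset.range (kap cc Q1 n t), cc j + ∑ j ∈ Finset.Ico (kap cc Q1 n t) n, cc j = r := by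
    rw [← hsum, Finset.range_eq_Ico, Finset.range_eq_Ico]
    exact Finset.sum_Ico_consecutive _ (Nat.zero_le _) (kap_le_n cc hQ1 hc hsum hA t le_rfl)
  omega

lemma Qfun_le (m : Fin t →₀ ℕ) (i : ℕ) : Qfun cc Q1 n t e m i ≤ cc i := by
  unfold Qfun
  by_cases hpad : i ∈ Finset.Ico (kap cc Q1 n t) n
  · have hz : ∀ b ∈ Finset.range t, fill cc (kap cc Q1 n b) (kap cc Q1 n (b + 1)) (mfn t m b) i = 0 := by
      intro b hb
      apply fill_eq_zero
      simp only [Finset.mem_Ico, Finset.mem_range] at *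
      intro h1
      have : kap cc Q1 n (b + 1) ≤ kap cc Q1 n t := kap_mono' cc hQ1 hc hsum hA _ _ (by omega) le_rfl
      omega
    rw [Finset.sum_eq_zero hz, zero_add]
    exact fill_le _ _ _ _ _
  · rw [fill_eq_zero _ _ _ _ _ hpad, add_zero]
    by_cases hex : ∃ b ∈ Finset.range t, i ∈ Finset.Ico (kap cc Q1 n b) (kap cc Q1 n (b + 1))
    · obtain ⟨b0, hb0, hmem⟩ := hex
      rw [Finset.sum_eq_single_of_mem b0 hb0 ?_]
      · exact fill_le _ _ _ _ _
      · intro b hb hne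
        apply fill_eq_zero
        simp only [Finset.mem_Ico, Finset.mem_range] at *
        intro h1
        rcases lt_or_gt_of_ne hne with hlt | hgt
        · have : kap cc Q1 n (b + 1) ≤ kap cc Q1 n b0 := kap_mono' cc hQ1 hc hsum hA _ _ (by omega) (by omega)
          omega
        · have : kap cc Q1 n (b0 + 1) ≤ kap cc Q1 n b := kap_mono' cc hQ1 hc hsum hA _ _ (by omega) (by omega)
          omega
    · push_neg at hex
      rw [Finset.sum_eq_zero (fun b hb => fill_eq_zero _ _ _ _ _ (hex b hb))]
      exact Nat.zero_le _

lemma Qfun_mdeg (m : Fin t →₀ ℕ) (hm1 : mdeg m ≤ e) (hm2 : ∀ i, m i ≤ Q1) :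
    ∑ i ∈ Finset.range n, Qfun cc Q1 n t e m i = e := by
  unfold Qfun
  rw [Finset.sum_add_distrib, Finset.sum_comm]
  have hblocks : ∀ b ∈ Finset.range t,
      ∑ i ∈ Finset.range n, fill cc (kap cc Q1 n b) (kap cc Q1 n (b + 1)) (mfn t m b) i = mfn t m b := by
    intro b hb
    simp only [Finset.mem_range] at hb
    apply sum_fill_range
    · exact kap_mono' cc hQ1 hc hsum hA b (b + 1) (by omega) (by omega)
    · exact kap_le_n cc hQ1 hc hsum hA (b + 1) (by omega)
    · refine le_trans ?_ (kap_cap cc hQ1 hc hsum hA b hb)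
      by_cases hbt : b < t
      · simp only [mfn, dif_pos hbt]; exact hm2 _
      · simp only [mfn, dif_neg hbt]; exact Nat.zero_le _
  rw [Finset.sum_congr rfl hblocks, mfn_sum m]
  have hpad : ∑ i ∈ Finset.range n, fill cc (kap cc Q1 n t) n (e - mdeg m) i = e - mdeg m := by
    apply sum_fill_range
    · exact kap_le_n cc hQ1 hc hsum hA t le_rfl
    · exact le_rfl
    · exact le_trans (Nat.sub_le _ _) (kap_pad cc hQ1 hc hsum hA)
  rw [hpad]
  omega

lemma Qfun_block_sum (m : Fin t →₀ ℕ) (hm2 : ∀ i, m i ≤ Q1) (b : ℕ) (hb : b < t) :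
    ∑ i ∈ Finset.Ico (kap cc Q1 n b) (kap cc Q1 n (b + 1)), Qfun cc Q1 n t e m i = mfn t m b := by
  have hpt : ∀ i ∈ Finset.Ico (kap cc Q1 n b) (kap cc Q1 n (b + 1)),
      Qfun cc Q1 n t e m i = fill cc (kap cc Q1 n b) (kap cc Q1 n (b + 1)) (mfn t m b) i := by
    intro i hi
    unfold Qfun
    have hpadz : fill cc (kap cc Q1 n t) n (e - mdeg m) i = 0 := by
      apply fill_eq_zero
      simp only [Finset.mem_Ico] at *
      intro h1
      have : kap cc Q1 n (b + 1) ≤ kap cc Q1 n t := kap_mono' cc hQ1 hc hsum hA _ _ (by omega) le_rfl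
      omega
    rw [hpadz, add_zero]
    rw [Finset.sum_eq_single_of_mem b (Finset.mem_range.2 hb) ?_]
    intro b' hb' hne
    apply fill_eq_zero
    simp only [Finset.mem_Ico, Finset.mem_range] at *
    intro h1
    rcases lt_or_gt_of_ne hne with hlt | hgt
    · have : kap cc Q1 n (b' + 1) ≤ kap cc Q1 n b := kap_mono' cc hQ1 hc hsum hA _ _ (by omega) (by omega)
      omega
    · have : kap cc Q1 n (b + 1) ≤ kap cc Q1 n b' := kap_mono' cc hQ1 hc hsum hA _ _ (by omega) (by omega)
      omega
  rw [Finset.sum_congr rfl hpt]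
  have hext : ∑ i ∈ Finset.Ico (kap cc Q1 n b) (kap cc Q1 n (b + 1)),
      fill cc (kap cc Q1 n b) (kap cc Q1 n (b + 1)) (mfn t m b) i
      = ∑ i ∈ Finset.range n, fill cc (kap cc Q1 n b) (kap cc Q1 n (b + 1)) (mfn t m b) i := by
    apply Finset.sum_subset
    · intro i hi
      simp only [Finset.mem_Ico, Finset.mem_range] at *
      have : kap cc Q1 n (b + 1) ≤ n := kap_le_n cc hQ1 hc hsum hA (b + 1) (by omega)
      omega
    · intro i _ hi
      exact fill_eq_zero _ _ _ _ _ hi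
  rw [hext]
  apply sum_fill_range
  · exact kap_mono' cc hQ1 hc hsum hA b (b + 1) (by omega) (by omega)
  · exact kap_le_n cc hQ1 hc hsum hA (b + 1) (by omega)
  · refine le_trans ?_ (kap_cap cc hQ1 hc hsum hA b hb)
    by_cases hbt : b < t
    · simp only [mfn, dif_pos hbt]; exact hm2 _
    · simp only [mfn, dif_neg hbt]; exact Nat.zero_le _

end
end QmapSec

section ExistsQ

lemma exists_Q {Q1 n r t e : ℕ} (cc : ℕ → ℕ) (hQ1 : 1 ≤ Q1) (hc : ∀ i, cc i ≤ Q1)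
    (hsum : ∑ i ∈ Finset.range n, cc i = r) (hA : t * (2 * Q1 - 1) + e ≤ r) :
    ∃ Q : {m : Fin t →₀ ℕ // mdeg m ≤ e ∧ ∀ i, m i ≤ Q1} → (Fin n →₀ ℕ),
      Function.Injective Q ∧ ∀ m, mdeg (Q m) = e ∧ ∀ i : Fin n, (Q m) i ≤ cc i.val := by
  refine ⟨fun m => Qmap cc Q1 n t e m.1, ?_, ?_⟩
  · intro m1 m2 h
    have hQf : ∀ i, i < n → Qfun cc Q1 n t e m1.1 i = Qfun cc Q1 n t e m2.1 i := by
      intro i hi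
      have := DFunLike.congr_fun h (⟨i, hi⟩ : Fin n)
      rwa [Qmap_apply, Qmap_apply] at this
    have hblocks : ∀ b, b < t → mfn t m1.1 b = mfn t m2.1 b := by
      intro b hb
      rw [← Qfun_block_sum cc hQ1 hc hsum hA m1.1 m1.2.2 b hb,
          ← Qfun_block_sum cc hQ1 hc hsum hA m2.1 m2.2.2 b hb]
      apply Finset.sum_congr rfl
      intro i hi
      simp only [Finset.mem_Ico] at hi
      have hkn : kap cc Q1 n (b + 1) ≤ n := kap_le_n cc hQ1 hc hsum hA (b + 1) (by omega)
      exact hQf i (by omega)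
    apply Subtype.ext
    ext i
    have h1 := hblocks i.val i.2
    simp only [mfn, dif_pos i.2, Fin.eta] at h1
    exact h1
  · intro m
    constructor
    · show mdeg (Qmap cc Q1 n t e m.1) = e
      unfold mdeg
      have : ∀ i : Fin n, Qmap cc Q1 n t e m.1 i = Qfun cc Q1 n t e m.1 i.val :=
        fun i => Qmap_apply cc m.1 i
      rw [Finset.sum_congr rfl (fun i _ => this i), Fin.sum_univ_eq_sum_range]
      exact Qfun_mdeg cc hQ1 hc hsum hA m.1 m.2.1 m.2.2
    · intro i
      exact Qfun_le cc hQ1 hc hsum hA m.1 i.val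

end ExistsQ

section Reduce

variable {n q : ℕ}

open scoped Classical in
noncomputable def mw (q : ℕ) {n : ℕ} (m : Fin n →₀ ℕ) : ℕ :=
  if ∀ i, m i ≤ q - 1 then 0 else (q + 1) ^ mdeg m

noncomputable def Mg {n q : ℕ} (g : MvPolynomial (Fin n) (ZMod q)) : ℕ :=
  ∑ m ∈ g.support, mw q m

lemma mw_le (m : Fin n →₀ ℕ) : mw q m ≤ (q + 1) ^ mdeg m := by
  unfold mw
  split
  · exact Nat.zero_le _
  · exact le_rfl

lemma reduce_exists_aux (hq2 : 2 ≤ q) (D : ℕ) :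
    ∀ N (g : MvPolynomial (Fin n) (ZMod q)), Mg g ≤ N → g.totalDegree ≤ D →
    ∃ h : MvPolynomial (Fin n) (ZMod q), RMReduced h ∧ (∀ x, eval x h = eval x g) ∧
      h.totalDegree ≤ D ∧
      ∀ μ : Fin n →₀ ℕ, (∀ i, μ i ≤ q - 1) → mdeg μ = D → coeff μ h = coeff μ g := by
  intro N
  induction N using Nat.strong_induction_on with
  | _ N ih =>
  intro g hMg hgD
  haveI : Fact (1 < q) := ⟨by omega⟩
  by_cases hred : ∀ m ∈ g.support, ∀ i : Fin n, m i ≤ q - 1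
  · exact ⟨g, hred, fun _ => rfl, hgD, fun _ _ _ => rfl⟩
  push_neg at hred
  obtain ⟨ν, hν, i, hνi⟩ := hred
  have hqν : q ≤ ν i := by omega
  set cν := coeff ν g with hcνdef
  have hcν : cν ≠ 0 := by rwa [← mem_support_iff]
  set ν' : Fin n →₀ ℕ := ν - Finsupp.single i q with hν'def
  have hν'add : ν' + Finsupp.single i q = ν := by
    ext j
    rcases eq_or_ne j i with rfl | hne
    · simp only [hν'def, Finsupp.add_apply, Finsupp.tsub_apply, Finsupp.single_eq_same]
      omega
    · simp [hν'def, Finsupp.single_apply, Ne.symm hne]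
  have hmdν : mdeg ν = mdeg ν' + q := by
    rw [← hν'add, mdeg_add, mdeg_single]
  have hνD : mdeg ν ≤ D := le_trans (mdeg_le_totalDegree hν) hgD
  -- the monic vanishing polynomial
  set Pq : Polynomial (ZMod q) := ∏ j ∈ Finset.range q, (Polynomial.X - Polynomial.C (j : ZMod q))
    with hPqdef
  have hmon : ∀ j ∈ Finset.range q, (Polynomial.X - Polynomial.C ((j : ℕ) : ZMod q)).Monic :=
    fun j _ => Polynomial.monic_X_sub_C _
  have hPmonic : Pq.Monic := Polynomial.monic_prod_of_monic _ _ hmon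
  have hPdeg : Pq.natDegree = q := by
    rw [hPqdef, Polynomial.natDegree_prod_of_monic _ _ hmon]
    have h1 : ∀ j ∈ Finset.range q, (Polynomial.X - Polynomial.C ((j : ℕ) : ZMod q)).natDegree = 1 :=
      fun j _ => Polynomial.natDegree_X_sub_C _
    rw [Finset.sum_congr rfl h1, Finset.sum_const, Finset.card_range, smul_eq_mul, mul_one]
  set Er : Polynomial (ZMod q) := Pq - Polynomial.X ^ q with hErdef
  have hErdeg : Er.natDegree < q := by
    by_cases hEr0 : Er = 0
    · rw [hEr0]; simp; omega
    have hle : Er.natDegree ≤ q := by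
      refine le_trans (Polynomial.natDegree_sub_le _ _) ?_
      simp [hPdeg, Polynomial.natDegree_X_pow]
    refine lt_of_le_of_ne hle ?_
    intro hEq
    have h1 : Er.coeff q = 0 := by
      rw [hErdef, Polynomial.coeff_sub, Polynomial.coeff_X_pow, if_pos rfl]
      have : Pq.coeff q = 1 := by
        have := hPmonic.coeff_natDegree
        rwa [hPdeg] at this
      rw [this, sub_self]
    have h2 := Polynomial.leadingCoeff_ne_zero.mpr hEr0
    rw [Polynomial.leadingCoeff, hEq] at h2
    exact h2 h1
  set es : ℕ → ZMod q := fun s => Er.coeff s with hesdef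
  -- expansion of the product in MvPolynomial
  have hprod : ∏ j ∈ Finset.range q, (X i - C ((j : ℕ) : ZMod q))
      = (X i : MvPolynomial (Fin n) (ZMod q)) ^ q
        + ∑ s ∈ Finset.range q, C (es s) * (X i) ^ s := by
    have h1 : (Polynomial.aeval (X i : MvPolynomial (Fin n) (ZMod q))) Pq
        = ∏ j ∈ Finset.range q, (X i - C ((j : ℕ) : ZMod q)) := by
      rw [hPqdef, map_prod]
      apply Finset.prod_congr rfl
      intro j _
      rw [map_sub, Polynomial.aeval_X, Polynomial.aeval_C]
      rfl
    have h2 : Pq = Polynomial.X ^ q + Er := by rw [hErdef]; ring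
    rw [← h1, h2, map_add, map_pow, Polynomial.aeval_X,
      Polynomial.aeval_eq_sum_range' hErdeg]
    congr 1
    apply Finset.sum_congr rfl
    intro s _
    rw [smul_eq_C_mul]
  set S : MvPolynomial (Fin n) (ZMod q) :=
    C cν * monomial ν' 1 * ∏ j ∈ Finset.range q, (X i - C ((j : ℕ) : ZMod q)) with hSdef
  have hSexp : S = monomial ν cν
      + ∑ s ∈ Finset.range q, monomial (ν' + Finsupp.single i s) (cν * es s) := by
    rw [hSdef, hprod, mul_add, Finset.mul_sum]
    congr 1
    · rw [X_pow_eq_monomial, C_mul_monomial, monomial_mul, hν'add]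
      simp
    · apply Finset.sum_congr rfl
      intro s _
      rw [X_pow_eq_monomial, C_mul_monomial]
      rw [show C (es s) * (monomial fun₀ | i => s) 1 = (monomial fun₀ | i => s) (es s) from by
        rw [C_mul_monomial, mul_one]]
      rw [monomial_mul, mul_one]
  set Tset : Finset (Fin n →₀ ℕ) :=
    (Finset.range q).image (fun s => ν' + Finsupp.single i s) with hTdef
  have hTmdeg : ∀ τ ∈ Tset, mdeg τ < mdeg ν := by
    intro τ hτ
    rw [hTdef, Finset.mem_image] at hτ
    obtain ⟨s, hs, rfl⟩ := hτ
    rw [mdeg_add, mdeg_single]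
    simp only [Finset.mem_range] at hs
    omega
  have hScoeff_other : ∀ τ, τ ≠ ν → τ ∉ Tset → coeff τ S = 0 := by
    intro τ hτν hτT
    rw [hSexp, coeff_add, coeff_monomial, if_neg (fun h => hτν h.symm), zero_add, coeff_sum]
    apply Finset.sum_eq_zero
    intro s hs
    rw [coeff_monomial, if_neg]
    intro h
    exact hτT (by rw [hTdef, Finset.mem_image]; exact ⟨s, hs, h⟩)
  have hScoeff_ν : coeff ν S = cν := by
    rw [hSexp, coeff_add, coeff_monomial, if_pos rfl, coeff_sum]
    have : ∑ s ∈ Finset.range q, coeff ν (monomial (ν' + Finsupp.single i s) (cν * es s)) = 0 := by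
      apply Finset.sum_eq_zero
      intro s hs
      rw [coeff_monomial, if_neg]
      intro h
      have : mdeg (ν' + Finsupp.single i s) = mdeg ν := by rw [h]
      rw [mdeg_add, mdeg_single] at this
      simp only [Finset.mem_range] at hs
      omega
    rw [this, add_zero]
  set g₂ := g - S with hg₂def
  have hg2coeff_ν : coeff ν g₂ = 0 := by
    rw [hg₂def, coeff_sub, hScoeff_ν, ← hcνdef, sub_self]
  have hg2coeff : ∀ τ, τ ≠ ν → τ ∉ Tset → coeff τ g₂ = coeff τ g := by
    intro τ h1 h2
    rw [hg₂def, coeff_sub, hScoeff_other τ h1 h2, sub_zero]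
  have hg2supp : g₂.support ⊆ (g.support.erase ν) ∪ Tset := by
    intro τ hτ
    rw [mem_support_iff] at hτ
    by_cases h1 : τ = ν
    · subst h1; exact absurd hg2coeff_ν hτ
    by_cases h2 : τ ∈ Tset
    · exact Finset.mem_union_right _ h2
    · apply Finset.mem_union_left
      rw [Finset.mem_erase, mem_support_iff]
      exact ⟨h1, by rwa [← hg2coeff τ h1 h2]⟩
  have hg2deg : g₂.totalDegree ≤ D := by
    apply totalDegree_le_of_mdeg
    intro m hm
    rcases Finset.mem_union.1 (hg2supp hm) with h | h
    · exact le_trans (mdeg_le_totalDegree (Finset.mem_of_mem_erase h)) hgD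
    · exact le_trans (le_of_lt (hTmdeg m h)) hνD
  have heval : ∀ x, eval x g₂ = eval x g := by
    intro x
    rw [hg₂def, map_sub]
    have : eval x S = 0 := by
      rw [hSdef, map_mul, map_prod]
      have : ∏ j ∈ Finset.range q, eval x (X i - C ((j : ℕ) : ZMod q))
          = ∏ j ∈ Finset.range q, (x i - ((j : ℕ) : ZMod q)) := by
        apply Finset.prod_congr rfl
        intro j _
        simp
      rw [this, prod_range_eq_zero (by omega) (x i), mul_zero]
    rw [this, sub_zero]
  -- the measure decreases
  have hmwνpos : mw q ν = (q + 1) ^ mdeg ν := by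
    unfold mw
    rw [if_neg]
    push_neg
    exact ⟨i, by omega⟩
  have hMgA : Mg g = (∑ τ ∈ g.support.erase ν, mw q τ) + (q + 1) ^ mdeg ν := by
    rw [← hmwνpos, Mg]
    exact (Finset.sum_erase_add _ _ hν).symm
  have hinj : ∀ x ∈ Finset.range q, ∀ y ∈ Finset.range q,
      ν' + Finsupp.single i x = ν' + Finsupp.single i y → x = y := by
    intro x _ y _ h
    have := DFunLike.congr_fun h i
    simpa [Finsupp.single_apply] using this
  have hTsum : ∑ τ ∈ Tset, mw q τ ≤ q * (q + 1) ^ (mdeg ν - 1) := by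
    rw [hTdef, Finset.sum_image hinj]
    calc ∑ s ∈ Finset.range q, mw q (ν' + Finsupp.single i s)
        ≤ ∑ _s ∈ Finset.range q, (q + 1) ^ (mdeg ν - 1) := by
          apply Finset.sum_le_sum
          intro s hs
          refine le_trans (mw_le _) ?_
          apply Nat.pow_le_pow_right (by omega)
          rw [mdeg_add, mdeg_single]
          simp only [Finset.mem_range] at hs
          omega
      _ = q * (q + 1) ^ (mdeg ν - 1) := by rw [Finset.sum_const, Finset.card_range, smul_eq_mul]
  have hlt : q * (q + 1) ^ (mdeg ν - 1) < (q + 1) ^ mdeg ν := by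
    have hk : mdeg ν - 1 + 1 = mdeg ν := by omega
    rw [← hk, pow_succ]
    have hpos : 0 < (q + 1) ^ (mdeg ν - 1) := Nat.pow_pos (by omega)
    calc q * (q + 1) ^ (mdeg ν - 1) < (q + 1) * (q + 1) ^ (mdeg ν - 1) :=
          (Nat.mul_lt_mul_right hpos).mpr (by omega)
      _ = (q + 1) ^ (mdeg ν - 1) * (q + 1) := by ring
  have hMg2 : Mg g₂ < Mg g := by
    have h1 : Mg g₂ ≤ ∑ τ ∈ (g.support.erase ν) ∪ Tset, mw q τ :=
      Finset.sum_le_sum_of_subset hg2supp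
    have h2 := Finset.sum_union_inter (s₁ := g.support.erase ν) (s₂ := Tset) (f := mw q)
    omega
  obtain ⟨h, hhred, hheval, hhdeg, hhcoeff⟩ := ih (Mg g₂) (by omega) g₂ le_rfl hg2deg
  refine ⟨h, hhred, fun x => by rw [hheval x, heval x], hhdeg, ?_⟩
  intro μ hμ hμD
  rw [hhcoeff μ hμ hμD]
  apply hg2coeff
  · intro h'
    subst h'
    have := hμ i
    omega
  · intro hμT
    have := hTmdeg μ hμT
    omega

lemma reduce_exists (hq2 : 2 ≤ q) (D : ℕ) (g : MvPolynomial (Fin n) (ZMod q))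
    (hgD : g.totalDegree ≤ D) :
    ∃ h : MvPolynomial (Fin n) (ZMod q), RMReduced h ∧ (∀ x, eval x h = eval x g) ∧
      h.totalDegree ≤ D ∧
      ∀ μ : Fin n →₀ ℕ, (∀ i, μ i ≤ q - 1) → mdeg μ = D → coeff μ h = coeff μ g :=
  reduce_exists_aux hq2 D (Mg g) g le_rfl hgD

end Reduce

section Finiteness

variable {q n e : ℕ}

lemma RMReduced.add {a b : MvPolynomial (Fin n) (ZMod q)} (ha : RMReduced a)
    (hb : RMReduced b) : RMReduced (a + b) := by
  intro m hm i
  rcases Finset.mem_union.1 (MvPolynomial.support_add hm) with h | h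
  · exact ha m h i
  · exact hb m h i

lemma finite_sigma (hq : 0 < q) (t : ℕ) :
    Finite {m : Fin t →₀ ℕ // mdeg m ≤ e ∧ ∀ i, m i ≤ q - 1} := by
  apply Finite.of_injective
    (fun m : {m : Fin t →₀ ℕ // mdeg m ≤ e ∧ ∀ i, m i ≤ q - 1} =>
      (fun i => (⟨m.1 i, by have := m.2.2 i; omega⟩ : Fin q)))
  intro m1 m2 h
  apply Subtype.ext
  ext i
  exact congrArg Fin.val (congrFun h i)

lemma finite_InP (hq : 0 < q) :
    Finite {P : MvPolynomial (Fin n) (ZMod q) // InP q n e P} := by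
  haveI : NeZero q := ⟨hq.ne'⟩
  apply Finite.of_injective
    (fun P : {P : MvPolynomial (Fin n) (ZMod q) // InP q n e P} =>
      (fun v : Fin n → Fin q =>
        coeff (Finsupp.equivFunOnFinite.symm (fun i => ((v i : ℕ))) : Fin n →₀ ℕ) P.1))
  intro P1 P2 h
  apply Subtype.ext
  apply MvPolynomial.ext
  intro μ
  by_cases hμ : ∀ i, μ i ≤ q - 1
  · have hv : (Finsupp.equivFunOnFinite.symm
        (fun i => (((⟨μ i, by have := hμ i; omega⟩ : Fin q) : ℕ))) : Fin n →₀ ℕ) = μ := by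
      ext i
      simp
    have := congrFun h (fun i => (⟨μ i, by have := hμ i; omega⟩ : Fin q))
    simp only at this
    rwa [hv] at this
  · push_neg at hμ
    obtain ⟨i0, hi0⟩ := hμ
    have hz : ∀ P : {P : MvPolynomial (Fin n) (ZMod q) // InP q n e P}, coeff μ P.1 = 0 := by
      intro P
      by_contra hc
      have := P.2.1 μ (mem_support_iff.2 hc) i0
      omega
    rw [hz P1, hz P2]

end Finiteness

lemma prime_count {q n d e N : ℕ} [Fact q.Prime] (hq2 : 2 ≤ q)
    [Finite {P : MvPolynomial (Fin n) (ZMod q) // InP q n e P}]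
    (f : MvPolynomial (Fin n) (ZMod q)) (hfred : RMReduced f) (hfdeg : f.totalDegree = d)
    (α : Fin n →₀ ℕ) (hαsupp : α ∈ f.support) (hαd : mdeg α = d)
    (hαmax : ∀ x' ∈ f.support.filter (fun m => mdeg m = d), wt q x' ≤ wt q α)
    (Q2 : Fin N → (Fin n →₀ ℕ)) (hQ2inj : Function.Injective Q2)
    (hQ2e : ∀ i, mdeg (Q2 i) = e) (hQ2cc : ∀ i j, α j + Q2 i j ≤ q - 1) :
    Nat.card {P : MvPolynomial (Fin n) (ZMod q) //
        InP q n e P ∧ ∀ h, RedProd f P h → h.totalDegree < d + e} * q ^ N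
      ≤ Nat.card {P : MvPolynomial (Fin n) (ZMod q) // InP q n e P} := by
  have hαred : ∀ i, α i ≤ q - 1 := hfred α hαsupp
  set W : (Fin N → ZMod q) → MvPolynomial (Fin n) (ZMod q) :=
    fun a => ∑ i : Fin N, monomial (Q2 i) (a i) with hWdef
  have hWcoeff : ∀ a τ, coeff τ (W a) = ∑ i : Fin N, if Q2 i = τ then a i else 0 := by
    intro a τ
    rw [hWdef]
    rw [coeff_sum]
    exact Finset.sum_congr rfl (fun m _ => coeff_monomial _ _ _)
  have hWcoeffQ : ∀ a m0, coeff (Q2 m0) (W a) = a m0 := by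
    intro a m0
    rw [hWcoeff]
    rw [Finset.sum_eq_single m0]
    · exact if_pos rfl
    · intro m _ hne
      exact if_neg (fun h => hne (hQ2inj h))
    · intro h
      exact absurd (Finset.mem_univ m0) h
  have hWsupp : ∀ a, ∀ τ ∈ (W a).support, ∃ m0, Q2 m0 = τ := by
    intro a τ hτ
    rw [mem_support_iff, hWcoeff] at hτ
    by_contra hno
    push_neg at hno
    exact hτ (Finset.sum_eq_zero (fun m _ => if_neg (hno m)))
  have hWred : ∀ a, RMReduced (W a) := by
    intro a m hm i
    obtain ⟨m0, rfl⟩ := hWsupp a m hm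
    have := hQ2cc m0 i
    omega
  have hWdeg : ∀ a, (W a).totalDegree ≤ e := by
    intro a
    apply totalDegree_le_of_mdeg
    intro m hm
    obtain ⟨m0, rfl⟩ := hWsupp a m hm
    rw [hQ2e m0]
  have hWsub : ∀ a a', W a - W a' = W (a - a') := by
    intro a a'
    rw [hWdef]
    simp only [Pi.sub_apply]
    rw [← Finset.sum_sub_distrib]
    exact Finset.sum_congr rfl (fun m _ => by rw [← map_sub])
  have hkey : ∀ a, a ≠ 0 → ∃ hh μ, RedProd f (W a) hh ∧
      mdeg μ = d + e ∧ coeff μ hh ≠ 0 := by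
    intro a ha
    obtain ⟨m0, hm0⟩ : ∃ m0, a m0 ≠ 0 := by
      by_contra hno
      push_neg at hno
      exact ha (funext hno)
    have hWne : W a ≠ 0 := fun h => hm0 (by rw [← hWcoeffQ a m0, h, coeff_zero])
    obtain ⟨β, hβ, hβmax⟩ := Finset.exists_max_image (W a).support (wt q)
      (support_nonempty.mpr hWne)
    obtain ⟨m1, hm1⟩ := hWsupp a β hβ
    have hβe : mdeg β = e := by rw [← hm1]; exact hQ2e m1
    have hβred : ∀ i : Fin n, β i ≤ q - 1 := by
      intro i
      rw [← hm1]
      have := hQ2cc m1 i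
      omega
    have hμred : ∀ i : Fin n, (α + β) i ≤ q - 1 := by
      intro i
      rw [Finsupp.add_apply, ← hm1]
      exact hQ2cc m1 i
    have hμmdeg : mdeg (α + β) = d + e := by rw [mdeg_add, hαd, hβe]
    have hcoeffμ : coeff (α + β) (f * W a) = coeff α f * coeff β (W a) := by
      have hmem : ((α, β) : (Fin n →₀ ℕ) × (Fin n →₀ ℕ)) ∈ Finset.HasAntidiagonal.antidiagonal (α + β) := by
        rw [Finset.HasAntidiagonal.mem_antidiagonal]
      rw [coeff_mul]
      apply Finset.sum_eq_single_of_mem (α, β) hmem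
      · intro uv huv hne
        have huvsum : uv.1 + uv.2 = α + β := Finset.HasAntidiagonal.mem_antidiagonal.1 huv
        by_contra hnz
        have hu : uv.1 ∈ f.support := mem_support_iff.2 (left_ne_zero_of_mul hnz)
        have hv : uv.2 ∈ (W a).support := mem_support_iff.2 (right_ne_zero_of_mul hnz)
        have hds : mdeg uv.1 + mdeg uv.2 = d + e := by
          rw [← hμmdeg, ← mdeg_add, huvsum]
        have hd2 : mdeg uv.1 ≤ d := by
          have := mdeg_le_totalDegree hu
          omega
        obtain ⟨m2, hm2⟩ := hWsupp a uv.2 hv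
        have hd3 : mdeg uv.2 = e := by rw [← hm2]; exact hQ2e m2
        have hd4 : mdeg uv.1 = d := by omega
        have hw5 : wt q uv.1 ≤ wt q α := hαmax uv.1 (Finset.mem_filter.2 ⟨hu, hd4⟩)
        have hw6 : wt q uv.2 ≤ wt q β := hβmax uv.2 hv
        have hw7 : wt q uv.1 + wt q uv.2 = wt q α + wt q β := by
          rw [← wt_add, ← wt_add, huvsum]
        have h8 : uv.1 = α := wt_inj hq2 (hfred _ hu) hαred (by omega)
        have h9 : uv.2 = β := by
          have h10 := huvsum
          rw [h8] at h10
          exact add_left_cancel h10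
        exact hne (Prod.ext h8 h9)
    have hcne : coeff (α + β) (f * W a) ≠ 0 := by
      rw [hcoeffμ]
      exact mul_ne_zero (mem_support_iff.1 hαsupp) (mem_support_iff.1 hβ)
    have hfWdeg : (f * W a).totalDegree ≤ d + e := by
      refine le_trans (totalDegree_mul _ _) ?_
      rw [hfdeg]
      exact Nat.add_le_add_left (hWdeg a) d
    obtain ⟨hh, hhred, hheval, hhdeg, hhcoeff⟩ := reduce_exists hq2 (d + e) (f * W a) hfWdeg
    refine ⟨hh, α + β, ⟨hhred, fun x => by rw [hheval x, map_mul]⟩, hμmdeg, ?_⟩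
    rw [hhcoeff (α + β) hμred hμmdeg]
    exact hcne
  have hmemInP : ∀ (P : {P : MvPolynomial (Fin n) (ZMod q) //
      InP q n e P ∧ ∀ h, RedProd f P h → h.totalDegree < d + e})
      (a : Fin N → ZMod q),
      InP q n e (P.1 + W a) := by
    intro P a
    exact ⟨RMReduced.add P.2.1.1 (hWred a),
      le_trans (totalDegree_add _ _) (max_le P.2.1.2 (hWdeg a))⟩
  have hFinj : Function.Injective (fun Pa : {P : MvPolynomial (Fin n) (ZMod q) //
      InP q n e P ∧ ∀ h, RedProd f P h → h.totalDegree < d + e}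
        × (Fin N → ZMod q) =>
      (⟨Pa.1.1 + W Pa.2, hmemInP Pa.1 Pa.2⟩ :
        {P : MvPolynomial (Fin n) (ZMod q) // InP q n e P})) := by
    rintro ⟨P, a⟩ ⟨P', a'⟩ hF
    have heq : P.1 + W a = P'.1 + W a' := congrArg Subtype.val hF
    have haa : a = a' := by
      by_contra hne
      have heq2 : W a + P.1 = P'.1 + W a' := by rw [add_comm] at heq; exact heq
      have hsub : W (a - a') = P'.1 - P.1 := by
        rw [← hWsub]
        exact sub_eq_sub_iff_add_eq_add.mpr heq2
      obtain ⟨hh, μ, hRP, hμmdeg, hμcoeff⟩ := hkey (a - a')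
        (fun h => hne (sub_eq_zero.mp h))
      obtain ⟨h₁, h₁red, h₁eval, h₁deg, _⟩ :=
        reduce_exists (n := n) hq2 ((f * P.1).totalDegree) (f * P.1) le_rfl
      have hP1bad : h₁.totalDegree < d + e :=
        P.2.2 h₁ ⟨h₁red, fun x => by rw [h₁eval x, map_mul]⟩
      have hP'rep : RedProd f P'.1 (hh + h₁) := by
        refine ⟨RMReduced.add hRP.1 h₁red, fun x => ?_⟩
        rw [map_add, hRP.2 x, h₁eval x, map_mul]
        have hWP : W (a - a') + P.1 = P'.1 := eq_sub_iff_add_eq.mp hsub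
        calc eval x f * eval x (W (a - a')) + eval x f * eval x P.1
            = eval x f * (eval x (W (a - a')) + eval x P.1) := by ring
          _ = eval x f * eval x P'.1 := by rw [← map_add, hWP]
      have hP'bad : (hh + h₁).totalDegree < d + e := P'.2.2 _ hP'rep
      have hc1 : coeff μ h₁ = 0 := coeff_eq_zero_of_lt (by omega)
      have hc2 : coeff μ (hh + h₁) ≠ 0 := by
        rw [coeff_add, hc1, add_zero]
        exact hμcoeff
      have := mdeg_le_totalDegree (mem_support_iff.2 hc2)
      omega
    subst haa
    have hPP : P.1 = P'.1 := add_right_cancel heq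
    rw [Prod.ext_iff]
    exact ⟨Subtype.ext hPP, rfl⟩
  calc Nat.card {P : MvPolynomial (Fin n) (ZMod q) //
        InP q n e P ∧ ∀ h, RedProd f P h → h.totalDegree < d + e} * q ^ N
      = Nat.card {P : MvPolynomial (Fin n) (ZMod q) //
          InP q n e P ∧ ∀ h, RedProd f P h → h.totalDegree < d + e}
        * Nat.card (Fin N → ZMod q) := by
        rw [Nat.card_fun, Nat.card_zmod]
        congr 1
        simp
    _ = Nat.card ({P : MvPolynomial (Fin n) (ZMod q) //
          InP q n e P ∧ ∀ h, RedProd f P h → h.totalDegree < d + e}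
        × (Fin N → ZMod q)) :=
        (Nat.card_prod _ _).symm
    _ ≤ Nat.card {P : MvPolynomial (Fin n) (ZMod q) // InP q n e P} :=
        Nat.card_le_card_of_injective _ hFinj

theorem stmt4 (q n d e r : ℕ) (hq : IsPrimePow q)
    (hr : d + r = (q - 1) * n) (hre : 3 * e ≤ r)
    (f : MvPolynomial (Fin n) (ZMod q)) (hf0 : f ≠ 0) (hfred : RMReduced f)
    (hfdeg : f.totalDegree = d) :
    Nat.card {P : MvPolynomial (Fin n) (ZMod q) //
        InP q n e P ∧ ∀ h, RedProd f P h → h.totalDegree < d + e}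
      * q ^ Nq q (((r / (q - 1)) / 3 : ℕ) : ℤ) e
    ≤ Nat.card {P : MvPolynomial (Fin n) (ZMod q) // InP q n e P} := by
  obtain ⟨p, k, hpp, hk, hpk⟩ := hq
  have hp : p.Prime := Nat.prime_iff.mpr hpp
  have hq2 : 2 ≤ q := by
    rw [← hpk]
    calc 2 ≤ p := hp.two_le
      _ = p ^ 1 := (pow_one p).symm
      _ ≤ p ^ k := Nat.pow_le_pow_right (by have := hp.two_le; omega) hk
  haveI : NeZero q := ⟨by omega⟩
  haveI hAllfin : Finite {P : MvPolynomial (Fin n) (ZMod q) // InP q n e P} :=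
    finite_InP (by omega)
  set t := (r / (q - 1)) / 3 with htdef
  have h1 : t * 3 ≤ r / (q - 1) := Nat.div_mul_le_self _ _
  have htu : 3 * (t * (q - 1)) ≤ r := by
    calc 3 * (t * (q - 1)) = (t * 3) * (q - 1) := by ring
      _ ≤ (r / (q - 1)) * (q - 1) := Nat.mul_le_mul_right _ h1
      _ ≤ r := Nat.div_mul_le_self r (q - 1)
  have hArith : t * (2 * (q - 1) - 1) + e ≤ r := by
    have hx : t * (2 * (q - 1) - 1) ≤ 2 * (t * (q - 1)) := by
      have h2 : 2 * (q - 1) - 1 ≤ 2 * (q - 1) := by omega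
      calc t * (2 * (q - 1) - 1) ≤ t * (2 * (q - 1)) := Nat.mul_le_mul_left _ h2
        _ = 2 * (t * (q - 1)) := by ring
    have h6 : 3 * (t * (2 * (q - 1) - 1)) ≤ 2 * r := by
      calc 3 * (t * (2 * (q - 1) - 1)) ≤ 3 * (2 * (t * (q - 1))) := Nat.mul_le_mul_left _ hx
        _ = 2 * (3 * (t * (q - 1))) := by ring
        _ ≤ 2 * r := Nat.mul_le_mul_left _ htu
    omega
  by_cases hqprime : q.Prime
  · -- PRIME CASE
    haveI : Fact q.Prime := ⟨hqprime⟩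
    have hsuppne : f.support.Nonempty := support_nonempty.mpr hf0
    have hSdne : (f.support.filter (fun m => mdeg m = d)).Nonempty := by
      obtain ⟨m, hm, hmeq⟩ := Finset.exists_mem_eq_sup f.support hsuppne
        (fun m => m.sum fun _ e => e)
      refine ⟨m, Finset.mem_filter.2 ⟨hm, ?_⟩⟩
      rw [← mdeg_eq_sum, ← hmeq]
      exact hfdeg.symm ▸ rfl
    obtain ⟨α, hαSd, hαmax⟩ := Finset.exists_max_image _ (wt q) hSdne
    obtain ⟨hαsupp, hαd⟩ := Finset.mem_filter.1 hαSd
    have hαred : ∀ i, α i ≤ q - 1 := hfred α hαsupp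
    set cc : ℕ → ℕ := fun i => if h : i < n then q - 1 - α ⟨i, h⟩ else 0 with hccdef
    have hcc : ∀ i, cc i ≤ q - 1 := by
      intro i
      simp only [hccdef]
      split <;> omega
    have hccv : ∀ i : Fin n, cc i.val = q - 1 - α i := by
      intro i
      simp only [hccdef, dif_pos i.2]
    have hccsum : ∑ i ∈ Finset.range n, cc i = r := by
      rw [← Fin.sum_univ_eq_sum_range]
      have h2 : ∑ i : Fin n, cc i.val = ∑ i : Fin n, (q - 1 - α i) :=
        Finset.sum_congr rfl (fun i _ => hccv i)
      rw [h2]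
      have h3 : ∑ i : Fin n, ((q - 1 - α i) + α i) = ∑ _i : Fin n, (q - 1) :=
        Finset.sum_congr rfl (fun i _ => by have := hαred i; omega)
      rw [Finset.sum_add_distrib] at h3
      have h4 : ∑ _i : Fin n, (q - 1) = n * (q - 1) := by
        rw [Finset.sum_const, Finset.card_univ, Fintype.card_fin, smul_eq_mul]
      have h5 : (∑ i : Fin n, α i) = d := by rw [← hαd]; rfl
      have h6 : (q - 1) * n = n * (q - 1) := mul_comm _ _
      omega
    obtain ⟨Q, hQinj, hQprop⟩ := exists_Q (t := t) (e := e) cc (by omega) hcc hccsum hArith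
    haveI hσfin : Finite {m : Fin t →₀ ℕ // mdeg m ≤ e ∧ ∀ i, m i ≤ q - 1} :=
      finite_sigma (by omega) t
    obtain ⟨N, ⟨eσ⟩⟩ := Finite.exists_equiv_fin
      {m : Fin t →₀ ℕ // mdeg m ≤ e ∧ ∀ i, m i ≤ q - 1}
    have hNcard : Nat.card {m : Fin t →₀ ℕ // mdeg m ≤ e ∧ ∀ i, m i ≤ q - 1} = N :=
      Nat.card_eq_of_equiv_fin eσ
    have hNq : Nq q ((t : ℕ) : ℤ) e = N := by
      rw [Nq, if_pos (Int.natCast_nonneg t)]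
      simp only [Int.toNat_natCast]
      exact hNcard
    have hQ2cc : ∀ (i : Fin N) (j : Fin n), α j + (Q (eσ.symm i)) j ≤ q - 1 := by
      intro i j
      have h1 := (hQprop (eσ.symm i)).2 j
      rw [hccv j] at h1
      have h2 := hαred j
      omega
    rw [hNq]
    exact prime_count hq2 f hfred hfdeg α hαsupp hαd hαmax (fun i => Q (eσ.symm i))
      (hQinj.comp eσ.symm.injective) (fun i => (hQprop (eσ.symm i)).1) hQ2cc
  · -- COMPOSITE CASE
    subst hpk
    have hk2 : 2 ≤ k := by
      rcases Nat.lt_or_ge k 2 with h | h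
      · have hk1 : k = 1 := by omega
        subst hk1
        rw [pow_one] at hqprime
        exact absurd hp hqprime
      · exact h
    have hempty : IsEmpty {P : MvPolynomial (Fin n) (ZMod (p ^ k)) //
        InP (p ^ k) n e P ∧ ∀ h, RedProd f P h → h.totalDegree < d + e} := by
      constructor
      rintro ⟨P, hPin, hbad⟩
      obtain ⟨h₁, h₁red, h₁eval, h₁deg, _⟩ :=
        reduce_exists (n := n) hq2 ((f * P).totalDegree) (f * P) le_rfl
      have hlow1 : h₁.totalDegree < d + e :=
        hbad h₁ ⟨h₁red, fun x => by rw [h₁eval x, map_mul]⟩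
      rcases Nat.eq_zero_or_pos (d + e) with hde | hde
      · omega
      have hn : 0 < n := by
        by_contra hn0
        push_neg at hn0
        have hn0' : n = 0 := by omega
        rw [hn0', mul_zero] at hr
        omega
      set i0 : Fin n := ⟨0, hn⟩ with hi0def
      set FULL : Fin n →₀ ℕ := Finsupp.equivFunOnFinite.symm (fun _ => p ^ k - 1) with hFULLdef
      have hFULLapp : ∀ i, FULL i = p ^ k - 1 := fun i => rfl
      have hFULLmdeg : mdeg FULL = n * (p ^ k - 1) := by
        unfold mdeg
        rw [Finset.sum_congr rfl (fun i _ => hFULLapp i), Finset.sum_const,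
          Finset.card_univ, Fintype.card_fin, smul_eq_mul]
      have hFULLge : d + e ≤ mdeg FULL := by
        rw [hFULLmdeg]
        have h6 : (p ^ k - 1) * n = n * (p ^ k - 1) := mul_comm _ _
        omega
      have hple : p ≤ p ^ k - 1 := by
        have h2 : p * p ≤ p ^ k := by
          calc p * p = p ^ 2 := (sq p).symm
            _ ≤ p ^ k := Nat.pow_le_pow_right (by have := hp.two_le; omega) hk2
        have h3 : 2 * p ≤ p * p := Nat.mul_le_mul_right p hp.two_le
        have h4 := hp.two_le
        omega
      set G : Fin n →₀ ℕ := FULL - Finsupp.single i0 p with hGdef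
      have hGapp : ∀ j, G j = FULL j - (Finsupp.single i0 p) j := by
        intro j
        rw [hGdef, Finsupp.tsub_apply]
      have hGadd : G + Finsupp.single i0 p = FULL := by
        ext j
        rw [Finsupp.add_apply, hGapp j]
        have hfj := hFULLapp j
        have := hple
        rcases eq_or_ne i0 j with h | hne
        · have h2 : (Finsupp.single i0 p) j = p := by rw [← h, Finsupp.single_eq_same]
          rw [h2]
          omega
        · have h2 : (Finsupp.single i0 p) j = 0 := Finsupp.single_eq_of_ne' hne
          rw [h2]
          omega
      set pc : ZMod (p ^ k) := (p : ZMod (p ^ k)) ^ (k - 1) with hpcdef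
      have hpcne : pc ≠ 0 := by
        rw [hpcdef]
        have hcast : ((p : ZMod (p ^ k))) ^ (k - 1) = ((p ^ (k - 1) : ℕ) : ZMod (p ^ k)) := by
          push_cast
          ring
        rw [hcast, Ne, ZMod.natCast_eq_zero_iff]
        intro hdvd
        have hle := Nat.le_of_dvd (Nat.pow_pos hp.pos) hdvd
        have hlt : p ^ (k - 1) < p ^ k := Nat.pow_lt_pow_right hp.one_lt (by omega)
        omega
      set h₀ : MvPolynomial (Fin n) (ZMod (p ^ k)) :=
        C pc * ((X i0) ^ p - X i0) * monomial G 1 with h₀def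
      have e1 : (C pc * ((X i0 : MvPolynomial (Fin n) (ZMod (p ^ k))) ^ p) * monomial G 1)
          = monomial FULL pc := by
        rw [X_pow_eq_monomial, C_mul_monomial, monomial_mul]
        rw [show (Finsupp.single i0 p) + G = FULL from by rw [add_comm]; exact hGadd]
        norm_num
      have e2 : (C pc * (X i0 : MvPolynomial (Fin n) (ZMod (p ^ k))) * monomial G 1)
          = monomial (G + Finsupp.single i0 1) pc := by
        rw [show (X i0 : MvPolynomial (Fin n) (ZMod (p ^ k))) = X i0 ^ 1 from (pow_one _).symm,
          X_pow_eq_monomial, C_mul_monomial, monomial_mul, add_comm]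
        norm_num
      have h₀eq : h₀ = monomial FULL pc - monomial (G + Finsupp.single i0 1) pc := by
        rw [h₀def, mul_sub, sub_mul, e1, e2]
      have hGne : G + Finsupp.single i0 1 ≠ FULL := by
        intro hcon
        have hmd1 : mdeg (G + Finsupp.single i0 1) = mdeg G + 1 := by
          rw [mdeg_add, mdeg_single]
        have hmd2 : mdeg G + p = mdeg FULL := by rw [← hGadd, mdeg_add, mdeg_single]
        have := hp.two_le
        rw [hcon] at hmd1
        omega
      have h₀eval : ∀ x, eval x h₀ = 0 := by
        intro x
        rw [h₀def]
        simp only [map_mul, map_sub, map_pow, eval_X, eval_C]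
        rw [hpcdef]
        rw [pow_sub_self_null hp hk2 (x i0), zero_mul]
      have h₀red : RMReduced h₀ := by
        intro m hm j
        rw [mem_support_iff, h₀eq, coeff_sub, coeff_monomial, coeff_monomial] at hm
        by_cases hF : FULL = m
        · rw [← hF, hFULLapp]
        · by_cases hG2 : G + Finsupp.single i0 1 = m
          · rw [← hG2, Finsupp.add_apply]
            have hgj := hGapp j
            have hfj := hFULLapp j
            have := hple
            have hp2 := hp.two_le
            rcases eq_or_ne i0 j with h | hne
            · have ha1 : (Finsupp.single i0 1) j = 1 := by rw [← h, Finsupp.single_eq_same]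
              have ha2 : (Finsupp.single i0 p) j = p := by rw [← h, Finsupp.single_eq_same]
              rw [ha1]
              rw [ha2] at hgj
              omega
            · have ha1 : (Finsupp.single i0 1) j = 0 := Finsupp.single_eq_of_ne' hne
              have ha2 : (Finsupp.single i0 p) j = 0 := Finsupp.single_eq_of_ne' hne
              rw [ha1]
              rw [ha2] at hgj
              omega
          · rw [if_neg hF, if_neg hG2, sub_zero] at hm
            exact absurd rfl hm
      have h₀coeffFULL : coeff FULL h₀ = pc := by
        rw [h₀eq, coeff_sub, coeff_monomial, if_pos rfl, coeff_monomial, if_neg hGne, sub_zero]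
      by_cases hcF : coeff FULL h₁ = 0
      · have hcoeffsum : coeff FULL (h₁ + h₀) ≠ 0 := by
          rw [coeff_add, hcF, zero_add, h₀coeffFULL]
          exact hpcne
        have hbad2 : (h₁ + h₀).totalDegree < d + e :=
          hbad (h₁ + h₀) ⟨RMReduced.add h₁red h₀red,
            fun x => by rw [map_add, h₁eval x, h₀eval x, add_zero, map_mul]⟩
        have := mdeg_le_totalDegree (mem_support_iff.2 hcoeffsum)
        omega
      · have := mdeg_le_totalDegree (mem_support_iff.2 hcF)
        omega
    have hzero : Nat.card {P : MvPolynomial (Fin n) (ZMod (p ^ k)) //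
        InP (p ^ k) n e P ∧ ∀ h, RedProd f P h → h.totalDegree < d + e} = 0 :=
      Nat.card_of_isEmpty
    rw [hzero, zero_mul]
    exact Nat.zero_le _
end

section
/- Fix an ordering ξ_0,...,ξ_{q−1} of F_q with basis b_i(X) = ∏_{j<i}(X − ξ_j). For any f ∈ P_q(n) and P ∈ P_q(n,d), writing P = ∑_{k=0}^{q−1} b_k(X_n)·Q_k(X_1,...,X_{n−1}), the product f·P in P_q(n) can be written as ∑_{k=0}^{q−1} b_k(X_n)·( Q_k · f|_{X_n=ξ_k} + ∑_{0≤j<k} Q_j · h_{j,k} ) for some polynomials h_{j,k} ∈ P_q(n−1) depending only on f. -/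
open MvPolynomial

/-- `b_i(X_x) = ∏_{j < i} (X_x - ξ_j)` as a multivariate polynomial. -/
noncomputable def bpoly (q n : ℕ) (ξ : Fin q → ZMod q) (i : ℕ) (x : Fin n) :
    MvPolynomial (Fin n) (ZMod q) :=
  ∏ j ∈ Finset.univ.filter (fun j : Fin q => (j : ℕ) < i), (X x - C (ξ j))

/-- A polynomial in `n + 1` variables not involving the last variable,
i.e. an element of `P_q(n)` viewed inside `P_q(n + 1)`. -/
def NoLast {n q : ℕ} (p : MvPolynomial (Fin (n + 1)) (ZMod q)) : Prop :=
  ∀ m ∈ p.support, m (Fin.last n) = 0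

/-- Restriction `f|_{X_n = c}`: substitute `c` for the last variable. -/
noncomputable def restrictLast {n q : ℕ} (c : ZMod q)
    (f : MvPolynomial (Fin (n + 1)) (ZMod q)) : MvPolynomial (Fin (n + 1)) (ZMod q) :=
  eval₂ C (fun i => if i = Fin.last n then C c else X i) f

/-! ### Auxiliary lemmas -/

lemma exp_red (q : ℕ) (hq : IsPrimePow q) :
    ∃ r : ℕ → ℕ, r 0 = 0 ∧ (∀ t, r t ≤ q - 1) ∧ ∀ (x : ZMod q) (t : ℕ), x ^ r t = x ^ t := by
  obtain ⟨p, e, hp, he, rfl⟩ := hq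
  have hp' : p.Prime := hp.nat_prime
  haveI : NeZero (p ^ e) := ⟨(pow_pos hp'.pos e).ne'⟩
  set lam := Nat.totient (p ^ e) with hlam
  have hlampos : 0 < lam := Nat.totient_pos.mpr (pow_pos hp'.pos e)
  have hepow : e ≤ p ^ (e - 1) := by
    have := Nat.lt_pow_self (n := e - 1) hp'.one_lt
    omega
  have helam : e + lam ≤ p ^ e := by
    have h1 : lam = p ^ (e - 1) * (p - 1) := Nat.totient_prime_pow hp' he
    have h2 : p ^ e = p ^ (e - 1) * p := by
      rw [← pow_succ]; congr 1; omega
    have key : p ^ (e - 1) + p ^ (e - 1) * (p - 1) = p ^ e := by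
      rw [h2]
      have hp2 : 2 ≤ p := hp'.two_le
      have h3 : p - 1 + 1 = p := by omega
      calc p ^ (e - 1) + p ^ (e - 1) * (p - 1) = p ^ (e - 1) * (p - 1 + 1) := by ring
        _ = p ^ (e - 1) * p := by rw [h3]
    omega
  have heq : e < p ^ e :=
    calc e < 2 ^ e := Nat.lt_two_pow_self (n := e)
    _ ≤ p ^ e := Nat.pow_le_pow_left hp'.two_le e
  refine ⟨fun t => if t ≤ p ^ e - 1 then t else e + (t - e) % lam, ?_, ?_, ?_⟩
  · exact if_pos (Nat.zero_le _)
  · intro t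
    by_cases h : t ≤ p ^ e - 1
    · simp [h]
    · simp only [h, if_false]
      have := Nat.mod_lt (t - e) hlampos
      omega
  · intro x t
    by_cases h : t ≤ p ^ e - 1
    · simp [h]
    · simp only [h, if_false]
      have ht : e ≤ t := by omega
      have key : ∀ s : ℕ, x ^ (e + s % lam) = x ^ (e + s) := by
        intro s
        by_cases hu : IsUnit x
        · obtain ⟨u, rfl⟩ := hu
          have hul : (u : ZMod (p ^ e)) ^ lam = 1 := by
            rw [← Units.val_pow_eq_pow_val, ZMod.pow_totient u, Units.val_one]
          conv_rhs => rw [(Nat.div_add_mod s lam).symm]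
          rw [pow_add, pow_add, pow_add, pow_mul, hul, one_pow, one_mul]
        · have hx : ((x.val : ℕ) : ZMod (p ^ e)) = x := ZMod.natCast_zmod_val x
          have hdvd : p ∣ x.val := by
            by_contra hnd
            apply hu
            rw [← hx, ZMod.isUnit_iff_coprime]
            exact Nat.Coprime.pow_right e
              ((Nat.Prime.coprime_iff_not_dvd hp').mpr hnd).symm
          have hx0 : x ^ e = 0 := by
            rw [← hx, ← Nat.cast_pow, ZMod.natCast_eq_zero_iff]
            exact pow_dvd_pow_of_dvd hdvd e
          rw [pow_add, pow_add, hx0, zero_mul, zero_mul]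
      have := key (t - e)
      rwa [show e + (t - e) = t by omega] at this

lemma reduce_poly {N q : ℕ} (r : ℕ → ℕ) (hr0 : r 0 = 0)
    (p : MvPolynomial (Fin N) (ZMod q))
    (hrpow : ∀ (x : ZMod q) (t : ℕ), x ^ r t = x ^ t) :
    ∃ p' : MvPolynomial (Fin N) (ZMod q),
      (∀ m' ∈ p'.support, ∃ m ∈ p.support, m' = Finsupp.mapRange r hr0 m) ∧
      ∀ x, eval x p' = eval x p := by
  classical
  refine ⟨∑ m ∈ p.support, monomial (Finsupp.mapRange r hr0 m) (coeff m p), ?_, ?_⟩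
  · intro m' hm'
    have := MvPolynomial.support_sum hm'
    obtain ⟨m, hm, hmem⟩ := Finset.mem_biUnion.mp this
    refine ⟨m, hm, ?_⟩
    by_cases hc : coeff m p = 0
    · rw [support_monomial, if_pos hc] at hmem; simp at hmem
    · rw [support_monomial, if_neg hc] at hmem
      simpa using hmem
  · intro x
    rw [map_sum, eval_eq x p]
    apply Finset.sum_congr rfl
    intro m hm
    rw [eval_monomial]
    rw [Finsupp.prod_mapRange_index (fun a => pow_zero (x a))]
    congr 1
    rw [Finsupp.prod]
    apply Finset.prod_congr rfl
    intro i _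
    exact hrpow (x i) (m i)

/-- Transfer to `Polynomial (MvPolynomial (Fin n) (ZMod q))`, with the last
variable as the polynomial variable. -/
noncomputable def phiMap (q n : ℕ) :
    MvPolynomial (Fin (n + 1)) (ZMod q) →+* Polynomial (MvPolynomial (Fin n) (ZMod q)) :=
  eval₂Hom (Polynomial.C.comp MvPolynomial.C)
    (Fin.lastCases Polynomial.X (fun i => Polynomial.C (MvPolynomial.X i)))

/-- Evaluation of such a polynomial at a point of `(ZMod q)^(n+1)`. -/
noncomputable def ExH (q n : ℕ) (x : Fin (n + 1) → ZMod q) :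
    Polynomial (MvPolynomial (Fin n) (ZMod q)) →+* ZMod q :=
  Polynomial.eval₂RingHom (eval (x ∘ Fin.castSucc)) (x (Fin.last n))

lemma ExH_C {q n : ℕ} (x : Fin (n + 1) → ZMod q) (z : MvPolynomial (Fin n) (ZMod q)) :
    ExH q n x (Polynomial.C z) = eval (x ∘ Fin.castSucc) z := by
  simp [ExH, Polynomial.coe_eval₂RingHom]

lemma ExH_phi {q n : ℕ} (x : Fin (n + 1) → ZMod q) (f : MvPolynomial (Fin (n + 1)) (ZMod q)) :
    ExH q n x (phiMap q n f) = eval x f := by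
  have h1 : phiMap q n f = eval₂ (Polynomial.C.comp MvPolynomial.C)
      (Fin.lastCases Polynomial.X (fun i => Polynomial.C (MvPolynomial.X i))) f := rfl
  rw [h1, MvPolynomial.eval₂_comp_left (ExH q n x)]
  have h2 : (ExH q n x).comp (Polynomial.C.comp MvPolynomial.C) = RingHom.id (ZMod q) := by
    ext r
    simp [ExH, Polynomial.coe_eval₂RingHom]
  have h3 : (ExH q n x) ∘ (Fin.lastCases Polynomial.X
      (fun i => Polynomial.C (MvPolynomial.X i)) : Fin (n+1) → _) = x := by
    funext i
    refine Fin.lastCases ?_ (fun j => ?_) i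
    · simp [ExH, Polynomial.coe_eval₂RingHom]
    · simp [ExH, Polynomial.coe_eval₂RingHom]
  rw [h2, h3, eval₂_id]

/-- The basis polynomials, upstairs. -/
noncomputable def BS (q n : ℕ) (ξ : Fin q → ZMod q) (k : ℕ) :
    Polynomial (MvPolynomial (Fin n) (ZMod q)) :=
  ∏ j ∈ Finset.univ.filter (fun j : Fin q => (j : ℕ) < k),
    (Polynomial.X - Polynomial.C (MvPolynomial.C (ξ j)))

lemma ExH_BS {q n : ℕ} (ξ : Fin q → ZMod q) (x : Fin (n + 1) → ZMod q) (k : ℕ) :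
    ExH q n x (BS q n ξ k) = eval x (bpoly q (n + 1) ξ k (Fin.last n)) := by
  rw [BS, bpoly, map_prod, map_prod]
  apply Finset.prod_congr rfl
  intro j _
  simp [ExH, Polynomial.coe_eval₂RingHom]

lemma eval_restrictLast {q n : ℕ} (c : ZMod q) (x : Fin (n + 1) → ZMod q)
    (f : MvPolynomial (Fin (n + 1)) (ZMod q)) :
    eval x (restrictLast c f) = eval (Function.update x (Fin.last n) c) f := by
  have h0 : eval x (restrictLast c f) = (eval x)
      (eval₂ C (fun i => if i = Fin.last n then C c else X i) f) := rfl
  rw [h0, MvPolynomial.eval₂_comp_left (eval x)]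
  have h2 : (eval x).comp (C : ZMod q →+* _) = RingHom.id (ZMod q) := by
    ext r; simp
  have h3 : ⇑(eval x) ∘ (fun i => if i = Fin.last n then C c else X i)
      = Function.update x (Fin.last n) c := by
    funext i
    by_cases hi : i = Fin.last n
    · subst hi; simp
    · simp [hi, Function.update_of_ne hi]
  rw [h2, h3, eval₂_id]

theorem stmt7 (q n d : ℕ) (hq : IsPrimePow q)
    (ξ : Fin q → ZMod q) (hξ : Function.Bijective ξ)
    (f : MvPolynomial (Fin (n + 1)) (ZMod q)) :
    ∃ h : Fin q → Fin q → MvPolynomial (Fin (n + 1)) (ZMod q),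
      (∀ j k, RMReduced (h j k) ∧ NoLast (h j k)) ∧
      ∀ P : MvPolynomial (Fin (n + 1)) (ZMod q), InP q (n + 1) d P →
        ∀ Q : Fin q → MvPolynomial (Fin (n + 1)) (ZMod q),
          (∀ k, RMReduced (Q k) ∧ NoLast (Q k)) →
          (∀ x, eval x P =
            ∑ k : Fin q, eval x (bpoly q (n + 1) ξ (k : ℕ) (Fin.last n)) * eval x (Q k)) →
          ∀ x, eval x f * eval x P =
            ∑ k : Fin q, eval x (bpoly q (n + 1) ξ (k : ℕ) (Fin.last n)) *
              (eval x (Q k) * eval x (restrictLast (ξ k) f)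
                + ∑ j ∈ Finset.univ.filter (fun j : Fin q => j < k),
                    eval x (Q j) * eval x (h j k)) := by
  classical
  obtain ⟨r, hr0, hrle, hrpow⟩ := exp_red q hq
  -- points in the coefficient ring
  set aN : ℕ → MvPolynomial (Fin n) (ZMod q) :=
    fun m => if h : m < q then MvPolynomial.C (ξ ⟨m, h⟩) else 0 with haN
  -- the division sequence
  set F := phiMap q n f with hF
  set gseq : Fin q → ℕ → Polynomial (MvPolynomial (Fin n) (ZMod q)) :=
    fun j => Nat.rec F (fun t p => p /ₘ (Polynomial.X - Polynomial.C (aN ((j : ℕ) + t))))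
    with hgseq
  set dd : Fin q → ℕ → MvPolynomial (Fin n) (ZMod q) :=
    fun j k => (gseq j (k - (j : ℕ))).eval (aN k) with hdd
  -- basis product recursion
  have BS_succ : ∀ m : ℕ, m < q →
      BS q n ξ (m + 1) = BS q n ξ m * (Polynomial.X - Polynomial.C (aN m)) := by
    intro m hm
    have hset : Finset.univ.filter (fun j : Fin q => (j : ℕ) < m + 1)
        = insert (⟨m, hm⟩ : Fin q) (Finset.univ.filter (fun j : Fin q => (j : ℕ) < m)) := by
      ext j
      simp only [Finset.mem_filter, Finset.mem_univ, true_and, Finset.mem_insert, Fin.ext_iff]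
      omega
    rw [BS, BS, hset, Finset.prod_insert (by simp)]
    have : aN m = MvPolynomial.C (ξ ⟨m, hm⟩) := dif_pos hm
    rw [this]
    ring
  -- the telescoping identity
  have htele : ∀ (j : Fin q) (t : ℕ), (j : ℕ) + t ≤ q →
      F * BS q n ξ (j : ℕ) =
        (∑ k ∈ Finset.Ico (j : ℕ) ((j : ℕ) + t), Polynomial.C (dd j k) * BS q n ξ k)
          + gseq j t * BS q n ξ ((j : ℕ) + t) := by
    intro j t
    induction t with
    | zero => intro _; simp [gseq]
    | succ t ih =>
      intro hle
      have hjt : (j : ℕ) + t < q := by omega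
      have hdiv : gseq j t = (Polynomial.X - Polynomial.C (aN ((j : ℕ) + t))) * gseq j (t + 1)
          + Polynomial.C ((gseq j t).eval (aN ((j : ℕ) + t))) := by
        have h1 := Polynomial.modByMonic_add_div (gseq j t)
          (Polynomial.X - Polynomial.C (aN ((j : ℕ) + t)))
        have h2 := Polynomial.modByMonic_X_sub_C_eq_C_eval (gseq j t) (aN ((j : ℕ) + t))
        have h3 : gseq j (t + 1) = gseq j t /ₘ (Polynomial.X - Polynomial.C (aN ((j : ℕ) + t))) := rfl
        rw [h3]
        linear_combination h2 - h1
      have heval : (gseq j t).eval (aN ((j : ℕ) + t)) = dd j ((j : ℕ) + t) := by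
        rw [hdd]
        congr 2
        omega
      rw [ih (by omega), show (j : ℕ) + (t + 1) = ((j : ℕ) + t) + 1 by omega,
        Finset.sum_Ico_succ_top (by omega : (j : ℕ) ≤ (j : ℕ) + t), BS_succ _ hjt]
      rw [hdiv, heval]
      ring
  -- evaluated identity
  have hmain : ∀ (j : Fin q) (x : Fin (n + 1) → ZMod q),
      eval x f * eval x (bpoly q (n + 1) ξ (j : ℕ) (Fin.last n)) =
        ∑ k ∈ Finset.Ico (j : ℕ) q,
          eval (x ∘ Fin.castSucc) (dd j k) * eval x (bpoly q (n + 1) ξ k (Fin.last n)) := by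
    intro j x
    have h0 := htele j (q - (j : ℕ)) (by omega)
    have hq' : (j : ℕ) + (q - (j : ℕ)) = q := by omega
    rw [hq'] at h0
    have h1 := congrArg (ExH q n x) h0
    rw [map_mul, map_add, map_sum, ExH_phi, ExH_BS] at h1
    -- the top basis polynomial evaluates to zero
    have hzero : eval x (bpoly q (n + 1) ξ q (Fin.last n)) = 0 := by
      obtain ⟨m, hm⟩ := hξ.2 (x (Fin.last n))
      rw [bpoly]
      rw [map_prod]
      apply Finset.prod_eq_zero (i := m) (by simp [m.isLt])
      simp [hm]
    rw [map_mul, ExH_BS, hzero, mul_zero, add_zero] at h1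
    rw [h1]
    apply Finset.sum_congr rfl
    intro k _
    rw [map_mul, ExH_BS, ExH_C]
  -- the diagonal coefficient is the restriction of f
  have hdiag : ∀ (j : Fin q) (x : Fin (n + 1) → ZMod q),
      eval (x ∘ Fin.castSucc) (dd j (j : ℕ)) = eval x (restrictLast (ξ j) f) := by
    intro j x
    have h1 : dd j (j : ℕ) = F.eval (MvPolynomial.C (ξ j)) := by
      simp only [hdd, Nat.sub_self]
      congr 1
      · simp only [haN]
        exact dif_pos j.isLt
    rw [h1]
    set y := Function.update x (Fin.last n) (ξ j) with hy
    have h3 : eval (x ∘ Fin.castSucc) (F.eval (MvPolynomial.C (ξ j))) = ExH q n y F := by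
      have h4 := (Polynomial.eval₂_at_apply
        (eval (x ∘ Fin.castSucc) : MvPolynomial (Fin n) (ZMod q) →+* ZMod q)
        (MvPolynomial.C (ξ j)) (p := F)).symm
      have h6 : y ∘ Fin.castSucc = x ∘ Fin.castSucc := by
        funext i
        exact Function.update_of_ne (Fin.castSucc_lt_last i).ne _ _
      have h7 : y (Fin.last n) = ξ j := Function.update_self _ _ _
      rw [show eval (x ∘ Fin.castSucc) (F.eval (MvPolynomial.C (ξ j)))
          = (eval (x ∘ Fin.castSucc) : MvPolynomial (Fin n) (ZMod q) →+* ZMod q)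
            (F.eval (MvPolynomial.C (ξ j))) from rfl, h4]
      simp [ExH, Polynomial.coe_eval₂RingHom, h6, h7]
    rw [h3, ExH_phi, eval_restrictLast, hy]
  -- define the h polynomials
  have hex : ∀ (j k : Fin q),
      ∃ p' : MvPolynomial (Fin (n + 1)) (ZMod q),
        (∀ m' ∈ p'.support, ∃ m ∈ (rename Fin.castSucc (dd j (k : ℕ))).support,
          m' = Finsupp.mapRange r hr0 m) ∧
        ∀ x, eval x p' = eval x (rename Fin.castSucc (dd j (k : ℕ))) :=
    fun j k => reduce_poly r hr0 _ hrpow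
  choose h hsup heval using hex
  have hval : ∀ (j k : Fin q) (x : Fin (n + 1) → ZMod q),
      eval x (h j k) = eval (x ∘ Fin.castSucc) (dd j (k : ℕ)) := by
    intro j k x
    rw [heval, eval_rename]
  refine ⟨h, ?_, ?_⟩
  · intro j k
    constructor
    · intro m hm i
      obtain ⟨m₀, _, rfl⟩ := hsup j k m hm
      rw [Finsupp.mapRange_apply]
      exact hrle _
    · intro m hm
      obtain ⟨m₀, hm₀, rfl⟩ := hsup j k m hm
      rw [Finsupp.mapRange_apply]
      have hlast : m₀ (Fin.last n) = 0 := by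
        rw [MvPolynomial.support_rename_of_injective (Fin.castSucc_injective n)] at hm₀
        obtain ⟨m₁, _, rfl⟩ := Finset.mem_image.mp hm₀
        apply Finsupp.mapDomain_notin_range
        rintro ⟨i, hi⟩
        exact (Fin.castSucc_lt_last i).ne hi
      rw [hlast, hr0]
  · intro P _ Q _ hPsum x
    rw [hPsum x, Finset.mul_sum]
    -- abbreviations
    set bv : ℕ → ZMod q := fun k => eval x (bpoly q (n + 1) ξ k (Fin.last n)) with hbv
    let w : Fin q → ℕ → ZMod q := fun j k => eval (x ∘ Fin.castSucc) (dd j k)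
    have step1 : ∀ j : Fin q,
        eval x f * (bv (j : ℕ) * eval x (Q j)) =
          ∑ k ∈ Finset.Ico (j : ℕ) q, eval x (Q j) * w j k * bv k := by
      intro j
      rw [show eval x f * (bv (j : ℕ) * eval x (Q j))
          = (eval x f * bv (j : ℕ)) * eval x (Q j) by ring, hmain j x, Finset.sum_mul]
      apply Finset.sum_congr rfl
      intro k _
      ring
    calc ∑ j : Fin q, eval x f * (bv (j : ℕ) * eval x (Q j))
        = ∑ j : Fin q, ∑ k ∈ Finset.Ico (j : ℕ) q, eval x (Q j) * w j k * bv k := by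
          exact Finset.sum_congr rfl fun j _ => step1 j
      _ = ∑ j : Fin q, ∑ k ∈ Finset.range q,
            if (j : ℕ) ≤ k then eval x (Q j) * w j k * bv k else 0 := by
          apply Finset.sum_congr rfl
          intro j _
          rw [show Finset.Ico (j : ℕ) q = (Finset.range q).filter (fun k => (j : ℕ) ≤ k) by
            ext k; simp [Finset.mem_Ico, Finset.mem_range]; omega]
          rw [Finset.sum_filter]
      _ = ∑ j : Fin q, ∑ k : Fin q,
            if (j : ℕ) ≤ (k : ℕ) then eval x (Q j) * w j (k : ℕ) * bv (k : ℕ) else 0 := by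
          apply Finset.sum_congr rfl
          intro j _
          exact (Fin.sum_univ_eq_sum_range
            (fun k => if (j : ℕ) ≤ k then eval x (Q j) * w j k * bv k else 0) q).symm
      _ = ∑ k : Fin q, ∑ j : Fin q,
            if (j : ℕ) ≤ (k : ℕ) then eval x (Q j) * w j (k : ℕ) * bv (k : ℕ) else 0 :=
          Finset.sum_comm
      _ = ∑ k : Fin q, bv (k : ℕ) *
            (eval x (Q k) * eval x (restrictLast (ξ k) f)
              + ∑ j ∈ Finset.univ.filter (fun j : Fin q => j < k),
                  eval x (Q j) * eval x (h j k)) := by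
          apply Finset.sum_congr rfl
          intro k _
          rw [← Finset.sum_filter]
          have hset : Finset.univ.filter (fun j : Fin q => (j : ℕ) ≤ (k : ℕ))
              = insert k (Finset.univ.filter (fun j : Fin q => j < k)) := by
            ext j
            simp only [Finset.mem_filter, Finset.mem_univ, true_and, Finset.mem_insert,
              Fin.ext_iff, Fin.lt_def]
            omega
          rw [hset, Finset.sum_insert (by simp)]
          rw [← hdiag k x, mul_add, Finset.mul_sum]
          congr 1
          · show eval x (Q k) * w k (k : ℕ) * bv (k : ℕ)
              = bv (k : ℕ) * (eval x (Q k) * eval (x ∘ Fin.castSucc) (dd k (k : ℕ)))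
            ring
          · apply Finset.sum_congr rfl
            intro j _
            rw [hval j k x]
            show eval x (Q j) * w j (k : ℕ) * bv (k : ℕ)
              = bv (k : ℕ) * (eval x (Q j) * eval (x ∘ Fin.castSucc) (dd j (k : ℕ)))
            ring
end

section
/- Let Z = {Z_1,...,Z_N} be variables partitioned into Π = {Z_1,...,Z_k} (blocks). Let P_1,...,P_m ∈ F_q[Z] be Π-multilinear polynomials (each monomial uses at most one variable from each block) with set-multilinear parts Q_1,...,Q_m (the homogeneous degree-k components, using exactly one variable from each block). Then Pr_{z ∼ F_q^N}[P_1(z)=0 ∧ ... ∧ P_m(z)=0] ≤ Pr_{z ∼ F_q^N}[Q_1(z)=0 ∧ ... ∧ Q_m(z)=0]. -/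
/-!
Process the blocks one at a time. If every monomial of `P` has degree at most one in the block
`B`, then for points `z`, `z₀` agreeing off `B` the part of `P` of degree zero in `B` cancels in
`P z - P z₀`, while the part `P'` of degree one in `B` is linear in the `B`-coordinates; hence
`P z - P z₀ = P' u` with `u = z - z₀` on `B` and `u = z` off `B`. Fixing in each fibre of the
projection forgetting `B` one common zero `z₀` of the `Pᵢ`, the map `z ↦ u` injects the common
zeros of the `Pᵢ` into those of the `P'ᵢ`: an inhomogeneous linear system has at most as many
solutions as its homogenization, fibre by fibre.
-/

open MvPolynomial Finset

theorem Finset.exists_prod_pow_eq_of_sum_eq_one {ι M : Type*} [CommMonoid M] [DecidableEq ι]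
    {s : Finset ι} {d : ι → ℕ} (h : ∑ i ∈ s, d i = 1) :
    ∃ j ∈ s, ∀ f : ι → M, ∏ i ∈ s, f i ^ d i = f j := by
  obtain ⟨j, hj, hdj⟩ := exists_ne_zero_of_sum_ne_zero (h ▸ one_ne_zero)
  have hsum := add_sum_erase s d hj
  have hrest : ∀ i ∈ s.erase j, d i = 0 := sum_eq_zero_iff.mp (by omega)
  refine ⟨j, hj, fun f => ?_⟩
  rw [prod_eq_single_of_mem j hj fun i hi hij => by rw [hrest i (mem_erase.mpr ⟨hij, hi⟩), pow_zero]]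
  rw [show d j = 1 by omega, pow_one]

theorem Finsupp.weight_indicator_one {σ : Type*} [Fintype σ] (B : Finset σ) (d : σ →₀ ℕ) :
    weight ((B : Set σ).indicator 1) d = ∑ j ∈ B, d j := by
  classical
  simp [weight_apply, sum_fintype, Set.indicator_apply, Finset.sum_ite_mem]

namespace MvPolynomial

variable {R σ κ : Type*} [CommRing R] [Fintype σ]

noncomputable def linearPartIn (B : Finset σ) : MvPolynomial σ R →ₗ[R] MvPolynomial σ R :=
  weightedHomogeneousComponent ((B : Set σ).indicator 1) 1

theorem coeff_linearPartIn (B : Finset σ) (P : MvPolynomial σ R) (d : σ →₀ ℕ) :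
    coeff d (linearPartIn B P) = if ∑ j ∈ B, d j = 1 then coeff d P else 0 := by
  rw [linearPartIn, coeff_weightedHomogeneousComponent, Finsupp.weight_indicator_one]

theorem support_linearPartIn_subset (B : Finset σ) (P : MvPolynomial σ R) :
    (linearPartIn B P).support ⊆ P.support := fun d hd => by
  rw [mem_support_iff, coeff_linearPartIn] at hd
  exact mem_support_iff.mpr fun h => hd (by simp [h])

theorem prod_pow_sub_prod_pow_of_eqOn_compl [DecidableEq σ] {B : Finset σ} {d : σ → ℕ}
    (hd : ∑ j ∈ B, d j ≤ 1) {z z₀ : σ → R} (hz : Set.EqOn z z₀ (↑B)ᶜ) :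
    ∏ i, z i ^ d i - ∏ i, z₀ i ^ d i =
      if ∑ j ∈ B, d j = 1 then ∏ i, (z - (B : Set σ).indicator z₀) i ^ d i else 0 := by
  set u := z - (B : Set σ).indicator z₀
  have hoff : ∀ f : σ → R, Set.EqOn f z (↑B)ᶜ →
      ∏ i ∈ Bᶜ, f i ^ d i = ∏ i ∈ Bᶜ, z i ^ d i := fun f hf =>
    prod_congr rfl fun i hi => by rw [hf (by simpa using hi)]
  have hu : Set.EqOn u z (↑B)ᶜ := fun i hi => by
    simp [u, Set.indicator_of_notMem hi]
  simp only [← prod_mul_prod_compl B, hoff z₀ hz.symm, hoff u hu]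
  rcases Nat.le_one_iff_eq_zero_or_eq_one.mp hd with h0 | h1
  · have hB : ∀ f : σ → R, ∏ i ∈ B, f i ^ d i = 1 := fun f =>
      prod_eq_one fun i hi => by rw [sum_eq_zero_iff.mp h0 i hi, pow_zero]
    simp [hB, h0]
  · obtain ⟨j, hj, hB⟩ := exists_prod_pow_eq_of_sum_eq_one (M := R) h1
    simp only [hB, h1, if_true, u, Pi.sub_apply, Set.indicator_of_mem (mem_coe.mpr hj)]
    ring

theorem eval_sub_indicator_linearPartIn {B : Finset σ} {P : MvPolynomial σ R}
    (hP : ∀ d ∈ P.support, ∑ j ∈ B, d j ≤ 1) {z z₀ : σ → R} (hz : Set.EqOn z z₀ (↑B)ᶜ) :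
    eval (z - (B : Set σ).indicator z₀) (linearPartIn B P) = eval z P - eval z₀ P := by
  classical
  rw [eval_eq', eval_eq', eval_eq', ← sum_sub_distrib,
    sum_subset (support_linearPartIn_subset B P) fun d _ hd => by
      rw [notMem_support_iff.mp hd, zero_mul]]
  refine sum_congr rfl fun d hd => ?_
  rw [← mul_sub, prod_pow_sub_prod_pow_of_eqOn_compl (hP d hd) hz, coeff_linearPartIn,
    ite_mul, mul_ite, zero_mul, mul_zero]

theorem card_zeroSet_le_card_zeroSet_linearPartIn [Finite R] {ι : Type*} {B : Finset σ}
    {P : ι → MvPolynomial σ R} (hP : ∀ i, ∀ d ∈ (P i).support, ∑ j ∈ B, d j ≤ 1) :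
    Nat.card {z : σ → R // ∀ i, eval z (P i) = 0}
      ≤ Nat.card {z : σ → R // ∀ i, eval z (linearPartIn B (P i)) = 0} := by
  set S := {z : σ → R | ∀ i, eval z (P i) = 0}
  let r : (σ → R) → ((↑B)ᶜ : Set σ) → R := ((↑B)ᶜ : Set σ).domRestrict
  let rep : (σ → R) → σ → R := fun z => Function.invFunOn r S (r z)
  have hrep : ∀ z ∈ S, rep z ∈ S ∧ Set.EqOn z (rep z) (↑B)ᶜ := fun z hz =>
    have h := Function.invFunOn_pos ⟨z, hz, rfl⟩
    ⟨h.1, Set.domRestrict_eq_domRestrict_iff.mp h.2.symm⟩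
  refine Nat.card_le_card_of_injective
    (fun z => ⟨z.1 - (B : Set σ).indicator (rep z.1), fun i => ?_⟩) ?_
  · obtain ⟨hS, hEq⟩ := hrep z.1 z.2
    rw [eval_sub_indicator_linearPartIn (hP i) hEq, z.2 i, hS i, sub_zero]
  · rintro ⟨z, hz⟩ ⟨z', hz'⟩ h
    have h : z - (B : Set σ).indicator (rep z) = z' - (B : Set σ).indicator (rep z') :=
      congrArg Subtype.val h
    have hoff : Set.EqOn z z' (↑B)ᶜ := fun j hj => by
      simpa [Set.indicator_of_notMem hj] using congrFun h j
    have hrep_eq : rep z = rep z' := by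
      simp only [rep, r, Set.domRestrict_eq_domRestrict_iff.mpr hoff]
    exact Subtype.ext (sub_left_inj.mp (hrep_eq ▸ h))

theorem card_zeroSet_le_card_zeroSet_setMultilinearPart [Finite R] [DecidableEq κ] {ι : Type*}
    (π : σ → κ) (T : Finset κ) {P Q : ι → MvPolynomial σ R}
    (hP : ∀ i, ∀ d ∈ (P i).support, ∀ b, ∑ j ∈ univ.filter (π · = b), d j ≤ 1)
    (hQ : ∀ i d, coeff d (Q i) =
      if ∀ b ∈ T, ∑ j ∈ univ.filter (π · = b), d j = 1 then coeff d (P i) else 0) :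
    Nat.card {z : σ → R // ∀ i, eval z (P i) = 0}
      ≤ Nat.card {z : σ → R // ∀ i, eval z (Q i) = 0} := by
  induction T using Finset.induction_on generalizing P with
  | empty =>
    obtain rfl : Q = P := by
      funext i
      ext d
      simp [hQ]
    rfl
  | insert b T _ ih =>
    set P' := fun i => linearPartIn (univ.filter (π · = b)) (P i)
    refine (card_zeroSet_le_card_zeroSet_linearPartIn fun i d hd => hP i d hd b).trans
      (ih (P := P') (fun i d hd => hP i d (support_linearPartIn_subset _ _ hd)) fun i d => ?_)
    rw [hQ, coeff_linearPartIn]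
    by_cases hb : ∑ j ∈ univ.filter (π · = b), d j = 1 <;> simp [hb]

end MvPolynomial

theorem stmt9 (q N k m : ℕ) (hq : IsPrimePow q) (π : Fin N → Fin k)
    (P Q : Fin m → MvPolynomial (Fin N) (ZMod q))
    (hmult : ∀ i, ∀ mon ∈ (P i).support, ∀ b : Fin k,
      ∑ j ∈ Finset.univ.filter (fun j => π j = b), mon j ≤ 1)
    (hQ : ∀ i mon, (Q i).coeff mon =
      if ∀ b : Fin k, ∑ j ∈ Finset.univ.filter (fun j => π j = b), mon j = 1
        then (P i).coeff mon else 0) :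
    Nat.card {z : Fin N → ZMod q // ∀ i, eval z (P i) = 0}
      ≤ Nat.card {z : Fin N → ZMod q // ∀ i, eval z (Q i) = 0} := by
  have : NeZero q := ⟨hq.pos.ne'⟩
  exact card_zeroSet_le_card_zeroSet_setMultilinearPart π univ hmult (by simpa using hQ)
end

section
/- Let q be prime, n ≥ 1, and suppose r := (q−1)n − d, Δ, e, d satisfy the hypotheses of the robust soundness theorem for one multiplier (q^{εr} ≤ Δ ≤ q^{r/4(q−1)−2}, δr ≤ e ≤ r/8). If f : F_q^n → F_q and P ∈ P_q(n,e) are such that f·P is Δ'-close to some F ∈ P_q(n,d+e), then for P' uniform in P_q(n,e), the probability that f·P·P' ∈ P_q(n,d+2e) is at least q^{−Δ'}. -/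
/-!
Let `D` be the set where `f · P` and `F` disagree. The polynomials of `P_q(n,e)` vanishing on
`D` form the kernel of the evaluation map `P_q(n,e) → 𝔽_q^D`, so they make up at least a
`q^(-|D|)` fraction of `P_q(n,e)`. For each such `P'` the function `f · P · P'` equals `F · P'`,
and reducing every exponent of `F * P'` modulo `x ^ q = x` represents it by a polynomial of
`P_q(n, d + 2e)`.
-/

open MvPolynomial

/- Since `x ^ q = x` on `𝔽_q`, a positive exponent can be reduced modulo `q - 1` into
`{1, …, q - 1}`; the exponent `0` has to stay `0`, as `0 ^ 0 = 1`. -/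
def redExp (q a : ℕ) : ℕ := if a = 0 then 0 else (a - 1) % (q - 1) + 1

@[simp]
lemma redExp_zero (q : ℕ) : redExp q 0 = 0 := rfl

lemma redExp_le_sub_one {q : ℕ} (hq : 1 < q) (a : ℕ) : redExp q a ≤ q - 1 := by
  unfold redExp
  split_ifs
  · omega
  · have := Nat.mod_lt (a - 1) (show 0 < q - 1 by omega)
    omega

lemma redExp_le_self (q a : ℕ) : redExp q a ≤ a := by
  unfold redExp
  split_ifs
  · omega
  · have := Nat.mod_le (a - 1) (q - 1)
    omega

lemma pow_redExp {K : Type*} [GroupWithZero K] [Fintype K] (x : K) (a : ℕ) :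
    x ^ redExp (Fintype.card K) a = x ^ a := by
  rcases Nat.eq_zero_or_pos a with rfl | ha
  · simp [redExp]
  rw [redExp, if_neg ha.ne']
  rcases eq_or_ne x 0 with rfl | hx
  · rw [zero_pow (by omega), zero_pow ha.ne']
  · have hdiv := Nat.div_add_mod (a - 1) (Fintype.card K - 1)
    obtain ⟨k, hk⟩ : ∃ k, a = (Fintype.card K - 1) * k + ((a - 1) % (Fintype.card K - 1) + 1) :=
      ⟨(a - 1) / (Fintype.card K - 1), by omega⟩
    conv_rhs =>
      rw [hk, pow_add, pow_mul, FiniteField.pow_card_sub_one_eq_one x hx, one_pow, one_mul]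

theorem exists_mem_restrictDegree_totalDegree_le_eval_eq {σ K : Type*} [Field K] [Fintype K]
    (p : MvPolynomial σ K) :
    ∃ G ∈ restrictDegree σ K (Fintype.card K - 1),
      G.totalDegree ≤ p.totalDegree ∧ ∀ x, eval x G = eval x p := by
  refine ⟨∑ m ∈ p.support, monomial (m.mapRange (redExp (Fintype.card K)) (redExp_zero _))
    (coeff m p), ?_, ?_, fun x => ?_⟩
  · refine Submodule.sum_mem _ fun m _ => ?_
    rw [mem_restrictDegree]
    intro s hs i
    rw [Finset.mem_singleton.1 (support_monomial_subset hs), Finsupp.mapRange_apply]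
    exact redExp_le_sub_one Fintype.one_lt_card _
  · refine (totalDegree_finsetSum _ _).trans (Finset.sup_le fun m hm => ?_)
    refine (totalDegree_monomial_le _ _).trans (le_trans ?_ (le_totalDegree hm))
    rw [Finsupp.sum_mapRange_index fun _ => rfl, Finsupp.sum]
    exact Finset.sum_le_sum fun i _ => redExp_le_self _ _
  · conv_rhs => rw [p.as_sum]
    simp only [map_sum, eval_monomial]
    refine Finset.sum_congr rfl fun m _ => ?_
    rw [Finsupp.prod_mapRange_index fun _ => pow_zero _]
    simp only [pow_redExp]

noncomputable def reducedDegreeLE (q n e : ℕ) :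
    Submodule (ZMod q) (MvPolynomial (Fin n) (ZMod q)) :=
  restrictDegree (Fin n) (ZMod q) (q - 1) ⊓ restrictTotalDegree (Fin n) (ZMod q) e

lemma mem_reducedDegreeLE {q n e : ℕ} {p : MvPolynomial (Fin n) (ZMod q)} :
    p ∈ reducedDegreeLE q n e ↔ InP q n e p := by
  rw [reducedDegreeLE, Submodule.mem_inf, mem_restrictDegree, mem_restrictTotalDegree]
  rfl

instance finite_reducedDegreeLE (q n e : ℕ) [Fact q.Prime] : Finite (reducedDegreeLE q n e) := by
  have : Finite (R (Fin n) (ZMod q)) := Module.finite_of_finite (ZMod q)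
  have hle :
      reducedDegreeLE q n e ≤ restrictDegree (Fin n) (ZMod q) (Fintype.card (ZMod q) - 1) := by
    rw [ZMod.card]
    exact inf_le_left
  exact Finite.of_injective (β := R (Fin n) (ZMod q)) (Submodule.inclusion hle)
    (Submodule.inclusion_injective hle)

instance finite_subtype_inP_and (q n e : ℕ) [Fact q.Prime]
    (Q : MvPolynomial (Fin n) (ZMod q) → Prop) : Finite {P' // InP q n e P' ∧ Q P'} :=
  Finite.of_injective (β := reducedDegreeLE q n e) (fun p => ⟨p.1, mem_reducedDegreeLE.2 p.2.1⟩)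
    fun _ _ h => Subtype.ext (Subtype.mk.inj h)

theorem AddMonoidHom.card_le_card_ker_mul_card {G H : Type*} [AddGroup G] [AddGroup H]
    [Finite H] (φ : G →+ H) : Nat.card G ≤ Nat.card φ.ker * Nat.card H := by
  rw [← φ.ker.card_mul_index, AddSubgroup.index_ker]
  exact Nat.mul_le_mul_left _ (Nat.card_le_card_of_injective _ Subtype.val_injective)

noncomputable def evalOn {σ R : Type*} [CommSemiring R] (D : Set (σ → R)) :
    MvPolynomial σ R →+ (D → R) :=
  AddMonoidHom.pi fun x => (eval x.1).toAddMonoidHom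

theorem exists_inP_eval_eq_mul_of_vanishing_on_disagreement {q n a b : ℕ} [Fact q.Prime]
    {g : (Fin n → ZMod q) → ZMod q} {F P' : MvPolynomial (Fin n) (ZMod q)}
    (hF : F.totalDegree ≤ a) (hP' : P'.totalDegree ≤ b)
    (hgF : ∀ x, g x ≠ eval x F → eval x P' = 0) :
    ∃ G, InP q n (a + b) G ∧ ∀ x, g x * eval x P' = eval x G := by
  obtain ⟨G, hGred, hGdeg, hGeval⟩ := exists_mem_restrictDegree_totalDegree_le_eval_eq (F * P')
  rw [ZMod.card, mem_restrictDegree] at hGred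
  refine ⟨G, ⟨hGred, hGdeg.trans ((totalDegree_mul F P').trans (add_le_add hF hP'))⟩, fun x => ?_⟩
  rw [hGeval, map_mul]
  by_cases hx : g x = eval x F
  · rw [hx]
  · rw [hgF x hx, mul_zero, mul_zero]

theorem stmt15_general (q n d e Δ' : ℕ) (hq : q.Prime)
    (f : (Fin n → ZMod q) → ZMod q)
    (P : MvPolynomial (Fin n) (ZMod q))
    (F : MvPolynomial (Fin n) (ZMod q)) (hF : InP q n (d + e) F)
    (hclose : Nat.card {x : Fin n → ZMod q // f x * eval x P ≠ eval x F} ≤ Δ') :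
    Nat.card {P' : MvPolynomial (Fin n) (ZMod q) // InP q n e P'}
      ≤ Nat.card {P' : MvPolynomial (Fin n) (ZMod q) // InP q n e P' ∧
          ∃ G : MvPolynomial (Fin n) (ZMod q), InP q n (d + 2 * e) G ∧
            ∀ x, f x * eval x P * eval x P' = eval x G}
        * q ^ Δ' := by
  have : Fact q.Prime := ⟨hq⟩
  set V := reducedDegreeLE q n e
  set D : Set (Fin n → ZMod q) := {x | f x * eval x P ≠ eval x F}
  set φ := (evalOn D).comp V.toAddSubgroup.subtype
  calc Nat.card {P' : MvPolynomial (Fin n) (ZMod q) // InP q n e P'}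
      = Nat.card V := Nat.card_congr (Equiv.subtypeEquivRight fun _ => mem_reducedDegreeLE.symm)
    _ ≤ Nat.card φ.ker * Nat.card (D → ZMod q) := φ.card_le_card_ker_mul_card
    _ = Nat.card φ.ker * q ^ Nat.card D := by rw [Nat.card_fun, Nat.card_zmod]
    _ ≤ _ := Nat.mul_le_mul ?_ (Nat.pow_le_pow_right hq.pos hclose)
  refine Nat.card_le_card_of_injective (fun p => ⟨p.1.1, mem_reducedDegreeLE.1 p.1.2, ?_⟩)
    fun _ _ h => Subtype.ext (Subtype.ext (Subtype.mk.inj h))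
  have hvan : ∀ x, f x * eval x P ≠ eval x F → eval x p.1.1 = 0 := fun x hx =>
    congrFun (p.2 : φ p.1 = 0) ⟨x, hx⟩
  rw [two_mul, ← add_assoc]
  exact exists_inP_eval_eq_mul_of_vanishing_on_disagreement hF.2
    (mem_reducedDegreeLE.1 p.1.2).2 hvan

theorem stmt15 (q n d r e Δ Δ' : ℕ) (hq : q.Prime) (ε δ : ℝ)
    (hε0 : 0 < ε) (hε1 : ε < 1) (hδ0 : 0 < δ) (hδ1 : δ < 1)
    (hr : d + r = (q - 1) * n)
    (hΔl : (q : ℝ) ^ (ε * r) ≤ (Δ : ℝ))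
    (hΔu : (Δ : ℝ) ≤ (q : ℝ) ^ ((r : ℝ) / (4 * ((q : ℝ) - 1)) - 2))
    (hel : δ * (r : ℝ) ≤ (e : ℝ)) (heu : (e : ℝ) ≤ (r : ℝ) / 8)
    (f : (Fin n → ZMod q) → ZMod q)
    (P : MvPolynomial (Fin n) (ZMod q)) (hP : InP q n e P)
    (F : MvPolynomial (Fin n) (ZMod q)) (hF : InP q n (d + e) F)
    (hclose : Nat.card {x : Fin n → ZMod q // f x * eval x P ≠ eval x F} ≤ Δ') :
    Nat.card {P' : MvPolynomial (Fin n) (ZMod q) // InP q n e P'}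
      ≤ Nat.card {P' : MvPolynomial (Fin n) (ZMod q) // InP q n e P' ∧
          ∃ G : MvPolynomial (Fin n) (ZMod q), InP q n (d + 2 * e) G ∧
            ∀ x, f x * eval x P * eval x P' = eval x G}
        * q ^ Δ' :=
  stmt15_general q n d e Δ' hq f P F hF hclose
end

section
/- Let q be a prime power, f ∈ P_q(n) a polynomial of degree d' > d, and let e, k ≥ 1 with d + ek < (q−1)n. Then for P_1,...,P_k independent uniform in P_q(n,e), the probability that deg(f·P_1···P_k) ≤ d + ek is at most 1 − q^{−k/(q−1)} ≤ q^{−η(q,k)} where η(q,k) = 1/(q^{k/(q−1)} ln q). -/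
open MvPolynomial

/-!
For prime `q`, choose a top-degree monomial `X^m₀` of `f` and exponents `ν₁, …, ν_k` of degree
at most `e` such that `u = m₀ + ∑ νⱼ` is still reduced and `|u| > d + ek`. The coefficient of
`X^u` in the reduced product `f · P₁ ⋯ P_k` is a multilinear form in `(P₁, …, P_k)`; it is
nonzero at `Pⱼ = X^νⱼ` (no other monomial of `f · X^(∑ νⱼ)` reduces to `X^u`), and it vanishes
whenever the product has degree at most `d + ek`. Peeling off one argument at a time, a nonzero
multilinear form over `𝔽_q` is nonzero on at least a `(1 - 1/q)^k ≥ q^(-k/(q-1))` fraction of all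
tuples, since a nonzero linear map vanishes on at most a `1/q` fraction of its domain.

For `q = p^a` with `a ≥ 2`, `ZMod q` is not a field and reduced representatives are not unique:
`p^(a-1) (X^M - X^M')`, with `M = (q-1, …, q-1)` and `M'` equal to `M` except for a `p - 1` in
one coordinate, is reduced, of degree `(q-1)n`, and vanishes on `(ZMod q)^n`. So every product
has a reduced representative of degree `> d + ek` and the event is empty.

The second bound is `1 - y ≤ exp (-y)` for `y = q^(-k/(q-1))`.
-/

lemma one_sub_rpow_neg_le_rpow_neg_inv_mul_log {x : ℝ} (hx : 0 < x) (hx1 : x ≠ 1) (t : ℝ) :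
    1 - x ^ (-t) ≤ x ^ (-(1 / (x ^ t * Real.log x))) := by
  have hlog : Real.log x ≠ 0 := Real.log_ne_zero_of_pos_of_ne_one hx hx1
  have hexp : x ^ (-(1 / (x ^ t * Real.log x))) = Real.exp (-x ^ (-t)) := by
    rw [Real.rpow_def_of_pos hx, Real.rpow_neg hx.le]
    congr 1
    field_simp
  rw [hexp]
  linarith [Real.add_one_le_exp (-x ^ (-t))]

lemma rpow_neg_div_sub_one_le_one_sub_inv_pow {x : ℝ} (hx : 2 ≤ x) (k : ℕ) :
    x ^ (-(k : ℝ) / (x - 1)) ≤ (1 - x⁻¹) ^ k := by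
  have hx0 : 0 < x := by linarith
  have hx1 : 0 < x - 1 := by linarith
  have hinv : x⁻¹ ≤ 1 := inv_le_one_of_one_le₀ (by linarith)
  -- Bernoulli: `(1 - 1/x)^(x-1) ≥ 1 - (x-1)/x = 1/x`
  have hbern : x⁻¹ ≤ (1 - x⁻¹) ^ (x - 1) := by
    have := one_add_mul_self_le_rpow_one_add (s := -x⁻¹) (by linarith) (p := x - 1) (by linarith)
    rw [← sub_eq_add_neg] at this
    convert this using 1
    field_simp
    ring
  have hbase : x ^ (-1 / (x - 1)) ≤ 1 - x⁻¹ := by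
    rwa [← Real.rpow_le_rpow_iff (Real.rpow_nonneg hx0.le _) (by linarith) hx1,
      ← Real.rpow_mul hx0.le, div_mul_cancel₀ _ hx1.ne', Real.rpow_neg_one]
  calc x ^ (-(k : ℝ) / (x - 1)) = (x ^ (-1 / (x - 1))) ^ k := by
        rw [← Real.rpow_natCast, ← Real.rpow_mul hx0.le]
        ring_nf
    _ ≤ (1 - x⁻¹) ^ k := pow_le_pow_left₀ (Real.rpow_nonneg hx0.le _) hbase k

lemma pow_add_mod_eq_pow {M : Type*} [Monoid M] {x : M} {b Λ : ℕ}
    (h : ∀ s, b ≤ s → x ^ (s + Λ) = x ^ s) {t : ℕ} (ht : b ≤ t) :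
    x ^ (b + (t - b) % Λ) = x ^ t := by
  have h_mul : ∀ m s, b ≤ s → x ^ (s + Λ * m) = x ^ s := by
    intro m s hs
    induction m with
    | zero => simp
    | succ m ih => rw [mul_add_one, ← add_assoc, h _ (by omega), ih]
  rw [← h_mul ((t - b) / Λ) _ (Nat.le_add_right b _), add_assoc, Nat.mod_add_div,
    Nat.add_sub_cancel' ht]

lemma ZMod.pow_eq_zero_of_not_isUnit {p a : ℕ} (hp : p.Prime) {x : ZMod (p ^ a)}
    (hx : ¬IsUnit x) {s : ℕ} (hs : a ≤ s) : x ^ s = 0 := by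
  have : NeZero (p ^ a) := ⟨pow_ne_zero a hp.ne_zero⟩
  obtain ⟨c, hc⟩ : p ∣ x.val := by
    by_contra hpx
    apply hx
    rw [← ZMod.natCast_zmod_val x, ZMod.isUnit_iff_coprime]
    exact Nat.Coprime.pow_right a ((Nat.Prime.coprime_iff_not_dvd hp).mpr hpx).symm
  rw [← ZMod.natCast_zmod_val x, hc, ← Nat.cast_pow, ZMod.natCast_eq_zero_iff, mul_pow]
  exact (pow_dvd_pow p hs).mul_right _

lemma le_prime_pow_sub_totient {p : ℕ} (hp : p.Prime) (a : ℕ) :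
    a ≤ p ^ a - Nat.totient (p ^ a) := by
  obtain _ | a := a
  · exact Nat.zero_le _
  rw [Nat.totient_prime_pow_succ hp, pow_succ, Nat.mul_sub_one, Nat.sub_sub_self
    (Nat.le_mul_of_pos_right _ hp.pos)]
  exact Nat.lt_pow_self hp.one_lt

lemma ZMod.pow_add_totient {p a : ℕ} (hp : p.Prime) (x : ZMod (p ^ a)) {s : ℕ}
    (hs : p ^ a - Nat.totient (p ^ a) ≤ s) : x ^ (s + Nat.totient (p ^ a)) = x ^ s := by
  by_cases hx : IsUnit x
  · obtain ⟨u, rfl⟩ := hx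
    rw [pow_add, ← Units.val_pow_eq_pow_val u (Nat.totient _), ZMod.pow_totient, Units.val_one,
      mul_one]
  · have ha := (le_prime_pow_sub_totient hp a).trans hs
    rw [ZMod.pow_eq_zero_of_not_isUnit hp hx ha, ZMod.pow_eq_zero_of_not_isUnit hp hx (by omega)]

-- In `ZMod q`, `q = p^a`, we have `x^(s + φ q) = x^s` as soon as `s ≥ q - φ q = p^(a-1)`
-- (`x` is a unit or `x^a = 0`), so every exponent `t ≥ q` can be folded into `[q - φ q, q)`.
def expReduce (q t : ℕ) : ℕ :=
  if t < q then t else q - Nat.totient q + (t - (q - Nat.totient q)) % Nat.totient q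

lemma expReduce_of_lt {q t : ℕ} (ht : t < q) : expReduce q t = t := if_pos ht

lemma expReduce_le_self (q t : ℕ) : expReduce q t ≤ t := by
  unfold expReduce
  split_ifs with ht
  · rfl
  · have := Nat.mod_le (t - (q - Nat.totient q)) (Nat.totient q)
    have := Nat.totient_le q
    omega

lemma expReduce_zero (q : ℕ) : expReduce q 0 = 0 := Nat.le_zero.mp (expReduce_le_self q 0)

lemma expReduce_lt {q : ℕ} (hq : 0 < q) (t : ℕ) : expReduce q t < q := by
  unfold expReduce
  split_ifs with ht
  · exact ht
  · have := Nat.mod_lt (t - (q - Nat.totient q)) (Nat.totient_pos.mpr hq)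
    have := Nat.totient_le q
    omega

lemma ZMod.pow_expReduce {q : ℕ} (hq : IsPrimePow q) (x : ZMod q) (t : ℕ) :
    x ^ expReduce q t = x ^ t := by
  obtain ⟨p, a, hp, -, rfl⟩ := hq
  unfold expReduce
  split_ifs with ht
  · rfl
  · exact pow_add_mod_eq_pow (fun s hs => ZMod.pow_add_totient (Nat.prime_iff.mpr hp) x hs)
      (by have := Nat.totient_le (p ^ a); omega)

lemma ZMod.prime_pow_pred_mul_pow_eq {p a : ℕ} (hp : p.Prime) (ha : 1 ≤ a) (x : ZMod (p ^ a)) :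
    (p : ZMod (p ^ a)) ^ (a - 1) * x ^ (p ^ a - 1) =
      (p : ZMod (p ^ a)) ^ (a - 1) * x ^ (p - 1) := by
  have : Fact p.Prime := ⟨hp⟩
  have : NeZero (p ^ a) := ⟨pow_ne_zero a hp.ne_zero⟩
  have hq : 2 ≤ p ^ a := hp.two_le.trans (Nat.le_self_pow (by omega) p)
  have hfermat (y : ZMod p) : y ^ (p ^ a - 1) = y ^ (p - 1) := by
    by_cases hy : y = 0
    · rw [hy, zero_pow (by omega), zero_pow (Nat.sub_ne_zero_of_lt hp.one_lt)]
    · obtain ⟨s, hs⟩ : p - 1 ∣ p ^ a - 1 := by simpa using Nat.sub_dvd_pow_sub_pow p 1 a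
      rw [hs, pow_mul, ZMod.pow_card_sub_one_eq_one hy, one_pow]
  have hmod : x.val ^ (p ^ a - 1) ≡ x.val ^ (p - 1) [MOD p] := by
    rw [← ZMod.natCast_eq_natCast_iff]
    push_cast
    exact hfermat _
  -- multiplication by `p^(a-1)` in `ZMod (p^a)` only sees residues mod `p`
  have hmod' := (ZMod.natCast_eq_natCast_iff _ _ _).mpr (hmod.mul_left' (p ^ (a - 1)))
  rw [← pow_succ, Nat.sub_add_cancel ha] at hmod'
  push_cast [ZMod.natCast_zmod_val] at hmod'
  exact hmod'

lemma Finsupp.mapRange_eq_iff_of_degree_le {σ : Type*} [Fintype σ] {r : ℕ → ℕ}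
    {hr : r 0 = 0} (hle : ∀ t, r t ≤ t) {s u : σ →₀ ℕ} (hu : u.mapRange r hr = u)
    (hs : s.degree ≤ u.degree) :
    s.mapRange r hr = u ↔ s = u := by
  refine ⟨fun hsu => ?_, fun hsu => hsu ▸ hu⟩
  have hpt : ∀ i ∈ Finset.univ, (s.mapRange r hr) i ≤ s i := fun i _ => hle _
  have hdeg : ∑ i, (s.mapRange r hr) i = ∑ i, s i := by
    refine le_antisymm (Finset.sum_le_sum hpt) ?_
    rw [hsu, ← Finsupp.degree_eq_sum, ← Finsupp.degree_eq_sum]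
    exact hs
  rw [← hsu]
  ext i
  exact ((Finset.sum_eq_sum_iff_of_le hpt).mp hdeg i (Finset.mem_univ i)).symm

lemma Finsupp.exists_sum_eq_of_degree_le_mul {σ : Type*} (e : ℕ) :
    ∀ {k : ℕ} (μ : σ →₀ ℕ), μ.degree ≤ e * k →
      ∃ ν : Fin k → σ →₀ ℕ, ∑ j, ν j = μ ∧ ∀ j, (ν j).degree ≤ e
  | 0, μ, h =>
    ⟨0, by simpa [eq_comm] using (Finsupp.degree_eq_zero_iff μ).mp (by omega), fun j => j.elim0⟩
  | k + 1, μ, h => by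
    obtain ⟨ν₀, hle, hdeg⟩ := μ.exists_le_degree_eq (min e μ.degree) (min_le_right _ _)
    have hrest : (μ - ν₀).degree ≤ e * k := by
      have := congrArg Finsupp.degree (add_tsub_cancel_of_le hle)
      rw [map_add] at this
      rw [mul_add_one] at h
      omega
    obtain ⟨ν, hsum, hν⟩ := Finsupp.exists_sum_eq_of_degree_le_mul e (μ - ν₀) hrest
    refine ⟨Fin.cons ν₀ ν, by rw [Fin.sum_cons, hsum, add_tsub_cancel_of_le hle], ?_⟩
    exact Fin.cases (hdeg ▸ min_le_left _ _) hν

namespace MvPolynomial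

variable {σ R : Type*} [CommSemiring R]

lemma monomial_mem_restrictDegree {N : ℕ} {s : σ →₀ ℕ} (c : R) (hs : ∀ i, s i ≤ N) :
    monomial s c ∈ restrictDegree σ R N :=
  (monomial_mem_restrictSupport R).mpr (Or.inl hs)

lemma exists_mem_support_degree_eq_totalDegree {f : MvPolynomial σ R} (hf : f ≠ 0) :
    ∃ m ∈ f.support, m.degree = f.totalDegree := by
  obtain ⟨m, hm, h⟩ :=
    Finset.exists_mem_eq_sup f.support (support_nonempty.mpr hf) fun s => s.degree
  exact ⟨m, hm, h.symm⟩

section mapExponents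

variable (r : ℕ → ℕ) (hr : r 0 = 0)

noncomputable def mapExponents : MvPolynomial σ R →ₗ[R] MvPolynomial σ R :=
  (basisMonomials σ R).constr R fun s => monomial (s.mapRange r hr) 1

@[simp]
lemma mapExponents_monomial (s : σ →₀ ℕ) (c : R) :
    mapExponents r hr (monomial s c) = monomial (s.mapRange r hr) c := by
  have hs : monomial s c = c • basisMonomials σ R s := by
    rw [coe_basisMonomials, smul_monomial, smul_eq_mul, mul_one]
  rw [hs, map_smul, mapExponents, Module.Basis.constr_basis, smul_monomial, smul_eq_mul,
    mul_one]

lemma eval_mapExponents (h : ∀ (x : R) (t : ℕ), x ^ r t = x ^ t) (x : σ → R)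
    (g : MvPolynomial σ R) : eval x (mapExponents r hr g) = eval x g := by
  induction g using MvPolynomial.induction_on' with
  | monomial s c =>
    rw [mapExponents_monomial, eval_monomial, eval_monomial,
      Finsupp.prod_mapRange_index (fun _ => pow_zero _)]
    simp only [h]
  | add g₁ g₂ h₁ h₂ => rw [map_add, map_add, map_add, h₁, h₂]

lemma mapExponents_mem_restrictDegree {N : ℕ} (h : ∀ t, r t ≤ N) (g : MvPolynomial σ R) :
    mapExponents r hr g ∈ restrictDegree σ R N := by
  induction g using MvPolynomial.induction_on' with
  | monomial s c =>
    rw [mapExponents_monomial]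
    exact monomial_mem_restrictDegree c fun i => h _
  | add g₁ g₂ h₁ h₂ => rw [map_add]; exact add_mem h₁ h₂

lemma coeff_mapExponents_of_forall_mem_support {g : MvPolynomial σ R} {u : σ →₀ ℕ}
    (h : ∀ s ∈ g.support, s.mapRange r hr = u ↔ s = u) :
    coeff u (mapExponents r hr g) = coeff u g := by
  classical
  conv_lhs => rw [g.as_sum]
  rw [map_sum, coeff_sum]
  simp only [mapExponents_monomial, coeff_monomial]
  by_cases hu : u ∈ g.support
  · rw [Finset.sum_eq_single_of_mem u hu fun s hs hsu => if_neg ((h s hs).not.mpr hsu),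
      if_pos ((h u hu).mpr rfl)]
  · rw [notMem_support_iff.mp hu]
    exact Finset.sum_eq_zero fun s hs =>
      if_neg ((h s hs).not.mpr (ne_of_mem_of_not_mem hs hu))

end mapExponents

lemma coeff_mapExponents_mul_monomial [Fintype σ] {r : ℕ → ℕ} {hr : r 0 = 0}
    (hle : ∀ t, r t ≤ t) {f : MvPolynomial σ R} {m μ : σ →₀ ℕ}
    (hm : ∀ s ∈ f.support, s.degree ≤ m.degree) (hfix : (m + μ).mapRange r hr = m + μ) :
    coeff (m + μ) (mapExponents r hr (f * monomial μ 1)) = coeff m f := by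
  rw [coeff_mapExponents_of_forall_mem_support, coeff_mul_monomial, mul_one]
  intro s hs
  refine Finsupp.mapRange_eq_iff_of_degree_le hle hfix ?_
  rw [mem_support_iff, coeff_mul_monomial'] at hs
  split_ifs at hs with hμs
  · rw [← tsub_add_cancel_of_le hμs, map_add, map_add]
    exact Nat.add_le_add_right (hm _ (mem_support_iff.mpr (left_ne_zero_of_mul hs))) _
  · exact absurd rfl hs

lemma mapExponents_expReduce_mem_restrictDegree {q : ℕ} (hq : 0 < q) (g : MvPolynomial σ R) :
    mapExponents (expReduce q) (expReduce_zero q) g ∈ restrictDegree σ R (q - 1) :=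
  mapExponents_mem_restrictDegree _ _ (fun t => Nat.le_sub_one_of_lt (expReduce_lt hq t)) g

lemma eval_mapExponents_expReduce {q : ℕ} (hq : IsPrimePow q) (x : σ → ZMod q)
    (g : MvPolynomial σ (ZMod q)) :
    eval x (mapExponents (expReduce q) (expReduce_zero q) g) = eval x g :=
  eval_mapExponents _ _ (ZMod.pow_expReduce hq) x g

end MvPolynomial

lemma exists_vanishing_mem_restrictDegree {σ : Type*} [Fintype σ] {p a : ℕ} (hp : p.Prime)
    (ha : 2 ≤ a) (i₀ : σ) :
    ∃ v : MvPolynomial σ (ZMod (p ^ a)), v ∈ restrictDegree σ _ (p ^ a - 1) ∧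
      (∀ x, eval x v = 0) ∧ (p ^ a - 1) * Fintype.card σ ≤ v.totalDegree := by
  classical
  have hpq : p < p ^ a := by
    calc p = p ^ 1 := (pow_one p).symm
      _ < p ^ a := Nat.pow_lt_pow_right hp.one_lt (by omega)
  have hc : (p : ZMod (p ^ a)) ^ (a - 1) ≠ 0 := by
    rw [← Nat.cast_pow, Ne, ZMod.natCast_eq_zero_iff, Nat.pow_dvd_pow_iff_le_right hp.one_lt]
    omega
  set M : σ →₀ ℕ := Finsupp.equivFunOnFinite.symm fun _ => p ^ a - 1
  have hM (i : σ) : M i = p ^ a - 1 := rfl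
  set M' : σ →₀ ℕ := M.erase i₀ + Finsupp.single i₀ (p - 1)
  have hM' : M' ≤ M := by
    conv_rhs => rw [← Finsupp.erase_add_single i₀ M]
    exact add_le_add_right (Finsupp.single_mono (show p - 1 ≤ M i₀ by rw [hM]; omega)) _
  have hMM' : M' ≠ M := fun h => by
    have := congrArg (· i₀) h
    simp only [M', Finsupp.add_apply, Finsupp.erase_same, Finsupp.single_eq_same, hM] at this
    have := hp.two_le
    omega
  set c := (p : ZMod (p ^ a)) ^ (a - 1)
  refine ⟨monomial M c - monomial M' c, sub_mem (monomial_mem_restrictDegree _ fun i => le_rfl)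
    (monomial_mem_restrictDegree _ fun i => hM' i), fun x => ?_, ?_⟩
  · have hsplit (t : ℕ) : eval x (monomial (M.erase i₀ + Finsupp.single i₀ t) c)
        = eval x (monomial (M.erase i₀) 1) * (c * x i₀ ^ t) := by
      rw [← one_mul c, ← monomial_mul, map_mul, eval_monomial (s := Finsupp.single i₀ t),
        Finsupp.prod_single_index (h := fun n e => x n ^ e) (pow_zero _), one_mul]
    conv_lhs => rw [← Finsupp.erase_add_single i₀ M]
    rw [map_sub, hsplit, hsplit, hM, ZMod.prime_pow_pred_mul_pow_eq hp (by omega), sub_self]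
  · have hcoeff : coeff M (monomial M c - monomial M' c) ≠ 0 := by
      rwa [coeff_sub, coeff_monomial, coeff_monomial, if_pos rfl, if_neg hMM', sub_zero]
    calc (p ^ a - 1) * Fintype.card σ = M.degree := by
          simp [Finsupp.degree_eq_sum, M, mul_comm]
      _ ≤ _ := le_totalDegree (mem_support_iff.mpr hcoeff)

lemma exists_exponents_degree_gt {σ : Type*} [Fintype σ] {m₀ : σ →₀ ℕ} {N d e k : ℕ}
    (hm₀ : ∀ i, m₀ i ≤ N) (hd : d < m₀.degree) (hdek : d + e * k < N * Fintype.card σ) :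
    ∃ ν : Fin k → σ →₀ ℕ, (∀ j, (ν j).degree ≤ e) ∧ (∀ i, m₀ i + (∑ j, ν j) i ≤ N) ∧
      d + e * k < (m₀ + ∑ j, ν j).degree := by
  set cap : σ →₀ ℕ := Finsupp.equivFunOnFinite.symm fun i => N - m₀ i
  have hcap (i : σ) : cap i = N - m₀ i := rfl
  have hcapdeg : cap.degree + m₀.degree = N * Fintype.card σ := by
    rw [Finsupp.degree_eq_sum, Finsupp.degree_eq_sum, ← Finset.sum_add_distrib]
    simp [hcap, Nat.sub_add_cancel (hm₀ _), mul_comm]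
  obtain ⟨μ, hμ, hμdeg⟩ := cap.exists_le_degree_eq (d + e * k + 1 - m₀.degree) (by omega)
  obtain ⟨ν, rfl, hν⟩ :=
    Finsupp.exists_sum_eq_of_degree_le_mul e _ (by omega : μ.degree ≤ e * k)
  refine ⟨ν, hν, fun i => ?_, ?_⟩
  · have := hμ i
    have := hm₀ i
    rw [hcap] at *
    omega
  · rw [map_add]
    omega

section Counting

variable {F V W : Type*} [Field F] [Finite F] [AddCommGroup V] [Module F V] [Finite V]
  [AddCommGroup W] [Module F W]

lemma Submodule.card_mul_card_le_of_ne_top {U : Submodule F V} (hU : U ≠ ⊤) :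
    Nat.card U * Nat.card F ≤ Nat.card V := by
  have := Fintype.ofFinite F
  have := Fintype.ofFinite V
  have := Fintype.ofFinite U
  rw [Nat.card_eq_fintype_card, Nat.card_eq_fintype_card, Nat.card_eq_fintype_card,
    Module.card_eq_pow_finrank (K := F) (V := U), Module.card_eq_pow_finrank (K := F) (V := V),
    ← pow_succ]
  exact Nat.pow_le_pow_right Fintype.card_pos (Submodule.finrank_lt hU)

lemma LinearMap.card_le_card_ne_zero {T : V →ₗ[F] W} (hT : T ≠ 0) :
    (1 - (Nat.card F : ℝ)⁻¹) * Nat.card V ≤ Nat.card {v // T v ≠ 0} := by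
  classical
  have hker := Submodule.card_mul_card_le_of_ne_top (mt LinearMap.ker_eq_top.mp hT)
  have hsplit : Nat.card (LinearMap.ker T) + Nat.card {v // T v ≠ 0} = Nat.card V := by
    rw [← Nat.card_sum, ← Nat.card_congr (Equiv.sumCompl fun v => T v = 0)]
    rfl
  have hF : (0 : ℝ) < Nat.card F := by exact_mod_cast Nat.card_pos
  have hker' : (Nat.card (LinearMap.ker T) : ℝ) ≤ Nat.card V * (Nat.card F : ℝ)⁻¹ := by
    rw [le_mul_inv_iff₀ hF]
    exact_mod_cast hker
  have hsplit' : (Nat.card (LinearMap.ker T) : ℝ) + Nat.card {v // T v ≠ 0} = Nat.card V := by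
    exact_mod_cast hsplit
  linarith

lemma MultilinearMap.card_le_card_ne_zero :
    ∀ {k : ℕ} {Φ : MultilinearMap F (fun _ : Fin k => V) W}, Φ ≠ 0 →
      ((1 - (Nat.card F : ℝ)⁻¹) * Nat.card V) ^ k ≤ Nat.card {P // Φ P ≠ 0}
  | 0, Φ, hΦ => by
    obtain ⟨P, hP⟩ : ∃ P, Φ P ≠ 0 := by
      by_contra! h
      exact hΦ (MultilinearMap.ext h)
    have : Nonempty {P // Φ P ≠ 0} := ⟨⟨P, hP⟩⟩
    simp
  | k + 1, Φ, hΦ => by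
    classical
    have := Fintype.ofFinite V
    set c := (1 - (Nat.card F : ℝ)⁻¹) * Nat.card V
    have hcurry : Φ.curryLeft ≠ 0 := by
      intro h
      apply hΦ
      ext P
      rw [← Fin.cons_self_tail P, ← Φ.curryLeft_apply, h]
      rfl
    have hc : 0 ≤ c := by
      have : (Nat.card F : ℝ)⁻¹ ≤ 1 := inv_le_one_of_one_le₀ (by exact_mod_cast Nat.card_pos)
      have : 0 ≤ 1 - (Nat.card F : ℝ)⁻¹ := by linarith
      positivity
    have hfib : Nat.card {P // Φ P ≠ 0} = ∑ v, Nat.card {Q // Φ.curryLeft v Q ≠ 0} := by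
      rw [← Nat.card_sigma]
      exact Nat.card_congr (((Fin.consEquiv fun _ => V).symm.subtypeEquiv fun P => by
        simp [Φ.curryLeft_apply]).trans
          (Equiv.subtypeProdEquivSigmaSubtype fun v Q => Φ.curryLeft v Q ≠ 0))
    calc c ^ (k + 1) = c ^ k * c := pow_succ c k
      _ ≤ c ^ k * Nat.card {v // Φ.curryLeft v ≠ 0} :=
          mul_le_mul_of_nonneg_left (LinearMap.card_le_card_ne_zero hcurry) (pow_nonneg hc k)
      _ = ∑ v ∈ Finset.univ.filter (Φ.curryLeft · ≠ 0), c ^ k := by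
          rw [Finset.sum_const, nsmul_eq_mul, Nat.card_eq_fintype_card, Fintype.card_subtype,
            mul_comm]
      _ ≤ ∑ v ∈ Finset.univ.filter (Φ.curryLeft · ≠ 0),
            (Nat.card {Q // Φ.curryLeft v Q ≠ 0} : ℝ) :=
          Finset.sum_le_sum fun v hv =>
            MultilinearMap.card_le_card_ne_zero (Finset.mem_filter.mp hv).2
      _ ≤ ∑ v, (Nat.card {Q // Φ.curryLeft v Q ≠ 0} : ℝ) :=
          Finset.sum_le_sum_of_subset_of_nonneg (Finset.filter_subset _ _)
            fun _ _ _ => by positivity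
      _ = Nat.card {P // Φ P ≠ 0} := by rw [hfib]; push_cast; rfl

lemma MultilinearMap.card_eq_zero_le {k : ℕ} {Φ : MultilinearMap F (fun _ : Fin k => V) W}
    (hΦ : Φ ≠ 0) :
    (Nat.card {P // Φ P = 0} : ℝ) ≤ (1 - (1 - (Nat.card F : ℝ)⁻¹) ^ k) * Nat.card V ^ k := by
  classical
  have hsplit : Nat.card {P // Φ P = 0} + Nat.card {P // Φ P ≠ 0} = Nat.card V ^ k := by
    rw [← Nat.card_sum, Nat.card_congr (Equiv.sumCompl _), Nat.card_fun, Nat.card_fin]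
  have hsplit' : (Nat.card {P // Φ P = 0} : ℝ) + Nat.card {P // Φ P ≠ 0} = Nat.card V ^ k := by
    exact_mod_cast hsplit
  have := MultilinearMap.card_le_card_ne_zero hΦ
  rw [mul_pow] at this
  linarith

end Counting

lemma rmReduced_iff {q n : ℕ} {p : MvPolynomial (Fin n) (ZMod q)} :
    RMReduced p ↔ p ∈ restrictDegree (Fin n) (ZMod q) (q - 1) :=
  (mem_restrictDegree _ _ _).symm

def ProdDegreeLE {q n k : ℕ} (f : MvPolynomial (Fin n) (ZMod q))
    (P : Fin k → MvPolynomial (Fin n) (ZMod q)) (D : ℕ) : Prop :=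
  ∀ h : MvPolynomial (Fin n) (ZMod q), RMReduced h →
    (∀ x, eval x h = eval x f * ∏ i, eval x (P i)) → h.totalDegree ≤ D

lemma exists_mem_restrictDegree_totalDegree_gt {σ : Type*} [Fintype σ] {q D : ℕ}
    (hq : IsPrimePow q) (hq' : ¬q.Prime) (hD : D < (q - 1) * Fintype.card σ)
    (g : MvPolynomial σ (ZMod q)) :
    ∃ h ∈ restrictDegree σ (ZMod q) (q - 1), (∀ x, eval x h = eval x g) ∧ D < h.totalDegree := by
  obtain ⟨p, a, hp, ha, rfl⟩ := hq
  rw [← Nat.prime_iff] at hp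
  have ha2 : 2 ≤ a := by
    by_contra
    obtain rfl : a = 1 := by omega
    exact hq' (by rwa [pow_one])
  obtain ⟨i₀⟩ : Nonempty σ :=
    Fintype.card_pos_iff.mp (Nat.pos_of_mul_pos_left (D.zero_le.trans_lt hD))
  obtain ⟨v, hvred, hveval, hvdeg⟩ := exists_vanishing_mem_restrictDegree hp ha2 i₀
  set h₀ := mapExponents (expReduce (p ^ a)) (expReduce_zero _) g
  have hh₀red := mapExponents_expReduce_mem_restrictDegree (pow_pos hp.pos a) g
  have hh₀eval := fun x => eval_mapExponents_expReduce ⟨p, a, hp.prime, ha, rfl⟩ x g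
  by_cases hlt : D < h₀.totalDegree
  · exact ⟨h₀, hh₀red, hh₀eval, hlt⟩
  · refine ⟨h₀ + v, add_mem hh₀red hvred,
      fun x => by rw [map_add, hveval, add_zero, hh₀eval], ?_⟩
    rw [totalDegree_add_eq_right_of_totalDegree_lt (by omega)]
    omega

lemma not_prodDegreeLE_of_not_prime {q n k D : ℕ} (hq : IsPrimePow q) (hq' : ¬q.Prime)
    (hD : D < (q - 1) * n) (f : MvPolynomial (Fin n) (ZMod q))
    (P : Fin k → MvPolynomial (Fin n) (ZMod q)) : ¬ProdDegreeLE f P D := by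
  obtain ⟨h, hred, heval, hdeg⟩ :=
    exists_mem_restrictDegree_totalDegree_gt hq hq' (by simpa using hD) (f * ∏ i, P i)
  exact fun hle => (hle h (rmReduced_iff.mpr hred) (by simpa using heval)).not_gt hdeg

noncomputable def reducedDegLE (q n e : ℕ) : Submodule (ZMod q) (MvPolynomial (Fin n) (ZMod q)) :=
  restrictDegree (Fin n) (ZMod q) (q - 1) ⊓ restrictTotalDegree (Fin n) (ZMod q) e

lemma mem_reducedDegLE {q n e : ℕ} {g : MvPolynomial (Fin n) (ZMod q)} :
    g ∈ reducedDegLE q n e ↔ InP q n e g := by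
  rw [reducedDegLE, Submodule.mem_inf, mem_restrictTotalDegree, InP, rmReduced_iff]

instance (q n e : ℕ) [NeZero q] : Finite (reducedDegLE q n e) :=
  have : Finite (restrictTotalDegree (Fin n) (ZMod q) e) := Module.finite_of_finite (ZMod q)
  Finite.of_injective _ (Submodule.inclusion_injective inf_le_right)

lemma card_inP_tuples (q n e k : ℕ) :
    Nat.card {P : Fin k → MvPolynomial (Fin n) (ZMod q) // ∀ i, InP q n e (P i)} =
      Nat.card (reducedDegLE q n e) ^ k := by
  rw [Nat.card_congr Equiv.subtypePiEquivPi, Nat.card_pi, Finset.prod_const, Finset.card_univ,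
    Fintype.card_fin]
  exact congrArg (· ^ k) (Nat.card_congr (Equiv.subtypeEquivRight fun _ => mem_reducedDegLE.symm))

noncomputable def coeffReducedProd {q n e k : ℕ} (f : MvPolynomial (Fin n) (ZMod q))
    (u : Fin n →₀ ℕ) : MultilinearMap (ZMod q) (fun _ : Fin k => reducedDegLE q n e) (ZMod q) :=
  (lcoeff (ZMod q) u ∘ₗ mapExponents (expReduce q) (expReduce_zero q) ∘ₗ
    LinearMap.mulLeft (ZMod q) f).compMultilinearMap
      ((MultilinearMap.mkPiAlgebra (ZMod q) (Fin k) _).compLinearMap fun _ => Submodule.subtype _)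

lemma coeffReducedProd_apply {q n e k : ℕ} (f : MvPolynomial (Fin n) (ZMod q))
    (u : Fin n →₀ ℕ) (Q : Fin k → reducedDegLE q n e) :
    coeffReducedProd f u Q =
      coeff u (mapExponents (expReduce q) (expReduce_zero q)
        (f * ∏ i, (Q i : MvPolynomial _ _))) := by
  simp [coeffReducedProd]

lemma coeffReducedProd_eq_zero {q n e k D : ℕ} (hq : IsPrimePow q)
    {f : MvPolynomial (Fin n) (ZMod q)} {u : Fin n →₀ ℕ} (hu : D < u.degree)
    {Q : Fin k → reducedDegLE q n e} (hQ : ProdDegreeLE f (fun i => Q i) D) :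
    coeffReducedProd f u Q = 0 := by
  rw [coeffReducedProd_apply]
  apply coeff_eq_zero_of_totalDegree_lt
  refine (hQ _ (rmReduced_iff.mpr (mapExponents_expReduce_mem_restrictDegree hq.pos _))
    fun x => ?_).trans_lt hu
  rw [eval_mapExponents_expReduce hq, map_mul, map_prod]

lemma coeffReducedProd_ne_zero {q n e k : ℕ} (hq : 0 < q) {f : MvPolynomial (Fin n) (ZMod q)}
    {m₀ : Fin n →₀ ℕ} (hm₀ : m₀ ∈ f.support) (hm₀deg : m₀.degree = f.totalDegree)
    {ν : Fin k → Fin n →₀ ℕ} (hνe : ∀ j, (ν j).degree ≤ e)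
    (hνq : ∀ i, m₀ i + (∑ j, ν j) i ≤ q - 1) :
    coeffReducedProd (e := e) (k := k) f (m₀ + ∑ j, ν j) ≠ 0 := by
  have hmem (j : Fin k) : monomial (ν j) (1 : ZMod q) ∈ reducedDegLE q n e := by
    refine ⟨monomial_mem_restrictDegree _ fun i => ?_,
      (mem_restrictTotalDegree _ _ _).mpr ((totalDegree_monomial_le _ _).trans (hνe j))⟩
    have := (Finset.single_le_sum (f := ν) (fun _ _ => zero_le) (Finset.mem_univ j) :
      ν j ≤ ∑ j, ν j) i
    have := hνq i
    omega
  have hfix : (m₀ + ∑ j, ν j).mapRange (expReduce q) (expReduce_zero q) = m₀ + ∑ j, ν j := by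
    ext i
    have := hνq i
    exact expReduce_of_lt (by rw [Finsupp.add_apply]; omega)
  have hP₀ : coeffReducedProd f (m₀ + ∑ j, ν j) (fun j => ⟨_, hmem j⟩) = coeff m₀ f := by
    rw [coeffReducedProd_apply, ← monomial_sum_one, coeff_mapExponents_mul_monomial
      (expReduce_le_self q) (fun s hs => hm₀deg ▸ le_totalDegree hs) hfix]
  exact fun h => mem_support_iff.mp hm₀ (by rw [← hP₀, h]; rfl)

theorem card_prodDegreeLE_le_of_prime {q n d e k : ℕ} [Fact q.Prime]
    {f : MvPolynomial (Fin n) (ZMod q)} (hred : RMReduced f) (hdd : d < f.totalDegree)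
    (hdek : d + e * k < (q - 1) * n) :
    (Nat.card {P : Fin k → MvPolynomial (Fin n) (ZMod q) //
        (∀ i, InP q n e (P i)) ∧ ProdDegreeLE f P (d + e * k)} : ℝ) ≤
      (1 - (1 - (q : ℝ)⁻¹) ^ k) *
        Nat.card {P : Fin k → MvPolynomial (Fin n) (ZMod q) // ∀ i, InP q n e (P i)} := by
  have hq := (Fact.out : q.Prime)
  obtain ⟨m₀, hm₀, hm₀deg⟩ :=
    exists_mem_support_degree_eq_totalDegree (by rintro rfl; simp at hdd : f ≠ 0)
  obtain ⟨ν, hνe, hνq, hνdeg⟩ := exists_exponents_degree_gt (hred m₀ hm₀)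
    (hm₀deg ▸ hdd) (by simpa [mul_comm] using hdek)
  set Φ := coeffReducedProd (e := e) f (m₀ + ∑ j, ν j)
  have hbad : Nat.card {P : Fin k → MvPolynomial (Fin n) (ZMod q) //
      (∀ i, InP q n e (P i)) ∧ ProdDegreeLE f P (d + e * k)} ≤ Nat.card {Q // Φ Q = 0} :=
    Nat.card_le_card_of_injective
      (fun P => ⟨fun i => ⟨P.1 i, mem_reducedDegLE.mpr (P.2.1 i)⟩,
        coeffReducedProd_eq_zero hq.isPrimePow hνdeg P.2.2⟩)
      fun P P' h => Subtype.ext (funext fun i =>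
        congrArg Subtype.val (congrFun (congrArg Subtype.val h) i))
  calc _ ≤ (Nat.card {Q // Φ Q = 0} : ℝ) := Nat.cast_le.mpr hbad
    _ ≤ (1 - (1 - (q : ℝ)⁻¹) ^ k) * Nat.card (reducedDegLE q n e) ^ k := by
        simpa using MultilinearMap.card_eq_zero_le
          (coeffReducedProd_ne_zero hq.pos hm₀ hm₀deg hνe hνq)
    _ = _ := by rw [card_inP_tuples, Nat.cast_pow]

theorem card_prodDegreeLE_le {q n d e k : ℕ} (hq : IsPrimePow q)
    {f : MvPolynomial (Fin n) (ZMod q)} (hred : RMReduced f) (hdd : d < f.totalDegree)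
    (hdek : d + e * k < (q - 1) * n) :
    (Nat.card {P : Fin k → MvPolynomial (Fin n) (ZMod q) //
        (∀ i, InP q n e (P i)) ∧ ProdDegreeLE f P (d + e * k)} : ℝ) ≤
      (1 - (1 - (q : ℝ)⁻¹) ^ k) *
        Nat.card {P : Fin k → MvPolynomial (Fin n) (ZMod q) // ∀ i, InP q n e (P i)} := by
  by_cases hprime : q.Prime
  · have : Fact q.Prime := ⟨hprime⟩
    exact card_prodDegreeLE_le_of_prime hred hdd hdek
  · have : IsEmpty {P : Fin k → MvPolynomial (Fin n) (ZMod q) //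
        (∀ i, InP q n e (P i)) ∧ ProdDegreeLE f P (d + e * k)} :=
      ⟨fun P => not_prodDegreeLE_of_not_prime hq hprime hdek f P.1 P.2.2⟩
    have hinv : (q : ℝ)⁻¹ ≤ 1 := inv_le_one_of_one_le₀ (by exact_mod_cast hq.one_lt.le)
    have hpow : (1 - (q : ℝ)⁻¹) ^ k ≤ 1 :=
      pow_le_one₀ (sub_nonneg.mpr hinv) (sub_le_self _ (by positivity))
    rw [Nat.card_of_isEmpty, Nat.cast_zero]
    exact mul_nonneg (sub_nonneg.mpr hpow) (Nat.cast_nonneg _)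

theorem stmt18_general (q n d d' e k : ℕ) (hq : IsPrimePow q)
    (hdd : d < d') (hdek : d + e * k < (q - 1) * n)
    (f : MvPolynomial (Fin n) (ZMod q)) (hred : RMReduced f)
    (hdeg : f.totalDegree = d') :
    -- the probability that `deg(f P_1 ⋯ P_k) ≤ d + ek` is at most `1 - q^{-k/(q-1)}`
    ((Nat.card {P : Fin k → MvPolynomial (Fin n) (ZMod q) //
        (∀ i, InP q n e (P i)) ∧
        ∀ h : MvPolynomial (Fin n) (ZMod q), RMReduced h →
          (∀ x, eval x h = eval x f * ∏ i, eval x (P i)) →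
          h.totalDegree ≤ d + e * k} : ℝ)
      ≤ (1 - (q : ℝ) ^ (-(k : ℝ) / ((q : ℝ) - 1))) *
          (Nat.card {P : Fin k → MvPolynomial (Fin n) (ZMod q) //
            ∀ i, InP q n e (P i)} : ℝ)) ∧
    -- and `1 - q^{-k/(q-1)} ≤ q^{-η(q,k)}` where `η(q,k) = 1/(q^{k/(q-1)} ln q)`
    (1 - (q : ℝ) ^ (-(k : ℝ) / ((q : ℝ) - 1))
      ≤ (q : ℝ) ^ (-(1 / ((q : ℝ) ^ ((k : ℝ) / ((q : ℝ) - 1)) * Real.log q)))) := by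
  subst hdeg
  have hq2 : (2 : ℝ) ≤ q := by exact_mod_cast hq.two_le
  refine ⟨(card_prodDegreeLE_le hq hred hdd hdek).trans ?_, ?_⟩
  · gcongr
    exact rpow_neg_div_sub_one_le_one_sub_inv_pow hq2 k
  · rw [neg_div]
    exact one_sub_rpow_neg_le_rpow_neg_inv_mul_log (by linarith) (by linarith) _

theorem stmt18 (q n d d' e k : ℕ) (hq : IsPrimePow q)
    (he : 1 ≤ e) (hk : 1 ≤ k) (hdd : d < d') (hdek : d + e * k < (q - 1) * n)
    (f : MvPolynomial (Fin n) (ZMod q)) (hf0 : f ≠ 0) (hred : RMReduced f)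
    (hdeg : f.totalDegree = d') :
    -- the probability that `deg(f P_1 ⋯ P_k) ≤ d + ek` is at most `1 - q^{-k/(q-1)}`
    ((Nat.card {P : Fin k → MvPolynomial (Fin n) (ZMod q) //
        (∀ i, InP q n e (P i)) ∧
        ∀ h : MvPolynomial (Fin n) (ZMod q), RMReduced h →
          (∀ x, eval x h = eval x f * ∏ i, eval x (P i)) →
          h.totalDegree ≤ d + e * k} : ℝ)
      ≤ (1 - (q : ℝ) ^ (-(k : ℝ) / ((q : ℝ) - 1))) *
          (Nat.card {P : Fin k → MvPolynomial (Fin n) (ZMod q) //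
            ∀ i, InP q n e (P i)} : ℝ)) ∧
    -- and `1 - q^{-k/(q-1)} ≤ q^{-η(q,k)}` where `η(q,k) = 1/(q^{k/(q-1)} ln q)`
    (1 - (q : ℝ) ^ (-(k : ℝ) / ((q : ℝ) - 1))
      ≤ (q : ℝ) ^ (-(1 / ((q : ℝ) ^ ((k : ℝ) / ((q : ℝ) - 1)) * Real.log q)))) :=
  stmt18_general q n d d' e k hq hdd hdek f hred hdeg
end
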